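/- arXiv:2604.18974 — 8 statements merged into one kernel-verified Lean document; each statement's English description precedes it below -/
import Mathlib

section
/- Let n ≥ 3 and 2 ≤ m ≤ n be integers, α = 1 or α = 1/m, and c > 0. Let ξ, χ : (0, ∞) → ℝ be continuously differentiable with ξ(r) > 0, ξ'(r) > 0, χ(r) > 0, and suppose S_m(r) > 0 for all r > 0. Let 0 < r₀ < R ≤ ∞ and let φ : [r₀, R) → ℝ be differentiable and satisfy the soliton angle ODE φ'(r) = C(n−1, m−1)^{−1} (ξ(r)/ξ'(r))^{m−1} tan φ(r) · [ (c χ(r))^{1/α} cos^{1/α} φ(r) / sin^m φ(r) − S_m(r) ] for all r ∈ [r₀, R). If φ(r₀) ∈ (0, π/2), then φ(r) ∈ (0, π/2) for all r ∈ [r₀, R). -/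
open Real Set Filter Topology Asymptotics

/-- The `m`-th mean curvature of the Killing cylinder of radius `r`, with the
convention `C(n-1, n) = 0` (automatic for `Nat.choose`). -/
noncomputable def cylSm (n m : ℕ) (ξ ξ' χ χ' : ℝ → ℝ) (r : ℝ) : ℝ :=
  (((n - 1).choose (m - 1) : ℝ) * (χ' r / χ r) + ((n - 1).choose m : ℝ) * (ξ' r / ξ r)) *
    (ξ' r / ξ r) ^ (m - 1)

private lemma exists_left_interval {r₀ r₁ : ℝ} (h : r₀ < r₁) {s : Set ℝ}
    (hs : s ∈ 𝓝[<] r₁) :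
    ∃ r₂ ∈ Set.Ioo r₀ r₁, r₂ ∈ s ∧ Set.Ioo r₂ r₁ ⊆ s ∩ Set.Ioo r₀ r₁ := by
  have hs' : s ∩ Set.Ioo r₀ r₁ ∈ 𝓝[<] r₁ :=
    Filter.inter_mem hs (Ioo_mem_nhdsLT_of_mem ⟨h, le_rfl⟩)
  rw [mem_nhdsLT_iff_exists_Ioo_subset] at hs'
  obtain ⟨a, ha, hsub⟩ := hs'
  have ha' : a < r₁ := ha
  set r₂ := (max a r₀ + r₁) / 2 with hr₂
  have h1 : max a r₀ < r₁ := max_lt ha' h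
  have h2 : max a r₀ < r₂ := by rw [hr₂]; linarith
  have h3 : r₂ < r₁ := by rw [hr₂]; linarith
  have hmem : r₂ ∈ Set.Ioo a r₁ := ⟨lt_of_le_of_lt (le_max_left _ _) h2, h3⟩
  have h4 := hsub hmem
  exact ⟨r₂, h4.2, h4.1, fun x hx =>
    hsub ⟨lt_trans (lt_of_le_of_lt (le_max_left a r₀) h2) hx.1, hx.2⟩⟩


set_option maxHeartbeats 1000000 in
/-- A solution of the soliton angle ODE that starts in the quadrant
`(0, π/2)` remains in `(0, π/2)` for all `r ∈ [r₀, R)` (with possibly `R = ∞`,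
encoded via `R : EReal`). -/
theorem stmt6 (n m : ℕ) (hn : 3 ≤ n) (hm : 2 ≤ m) (hmn : m ≤ n)
    (α c : ℝ) (hα : α = 1 ∨ α = 1 / m) (hc : 0 < c)
    (ξ χ ξ' χ' : ℝ → ℝ)
    (hξd : ∀ r ∈ Set.Ioi (0 : ℝ), HasDerivAt ξ (ξ' r) r)
    (hχd : ∀ r ∈ Set.Ioi (0 : ℝ), HasDerivAt χ (χ' r) r)
    (hξ'c : ContinuousOn ξ' (Set.Ioi 0)) (hχ'c : ContinuousOn χ' (Set.Ioi 0))
    (hξpos : ∀ r ∈ Set.Ioi (0 : ℝ), 0 < ξ r)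
    (hξ'pos : ∀ r ∈ Set.Ioi (0 : ℝ), 0 < ξ' r)
    (hχpos : ∀ r ∈ Set.Ioi (0 : ℝ), 0 < χ r)
    (hSpos : ∀ r ∈ Set.Ioi (0 : ℝ), 0 < cylSm n m ξ ξ' χ χ' r)
    (r₀ : ℝ) (R : EReal) (hr₀ : 0 < r₀) (hR : (r₀ : EReal) < R)
    (φ : ℝ → ℝ)
    (hφode : ∀ r : ℝ, r₀ ≤ r → (r : EReal) < R →
      HasDerivAt φ
        ((((n - 1).choose (m - 1) : ℝ))⁻¹ * (ξ r / ξ' r) ^ (m - 1) * Real.tan (φ r) *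
          ((c * χ r) ^ (1 / α) * Real.cos (φ r) ^ (1 / α) / Real.sin (φ r) ^ m -
            cylSm n m ξ ξ' χ χ' r)) r)
    (hφ0 : φ r₀ ∈ Set.Ioo 0 (π / 2)) :
    ∀ r : ℝ, r₀ ≤ r → (r : EReal) < R → φ r ∈ Set.Ioo 0 (π / 2) := by
  -- basic facts about the exponent p = 1/α
  have hmpos : 0 < m := lt_of_lt_of_le two_pos hm
  have hp1 : (1:ℝ) ≤ 1 / α := by
    rcases hα with h | h
    · rw [h]; norm_num
    · rw [h, one_div_one_div]
      exact_mod_cast le_trans one_le_two hm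
  have hp0 : (0:ℝ) ≤ 1 / α := le_trans zero_le_one hp1
  set S : ℝ → ℝ := cylSm n m ξ ξ' χ χ' with hSdef
  have hCm : (0:ℝ) < ((n - 1).choose (m - 1) : ℝ) := by
    exact_mod_cast Nat.choose_pos (Nat.sub_le_sub_right hmn 1)
  intro rb hrb hrbR
  by_contra hbad
  -- the set of bad points up to rb
  have hcoe : ∀ r : ℝ, r ≤ rb → (r : EReal) < R := fun r hr =>
    lt_of_le_of_lt (EReal.coe_le_coe_iff.mpr hr) hrbR
  have hφc : ContinuousOn φ (Icc r₀ rb) := fun r hr =>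
    ((hφode r hr.1 (hcoe r hr.2)).continuousAt).continuousWithinAt
  set K : Set ℝ := Icc r₀ rb ∩ φ ⁻¹' (Ioo 0 (π / 2))ᶜ with hKdef
  have hKne : K.Nonempty := ⟨rb, ⟨hrb, le_rfl⟩, hbad⟩
  have hKcl : IsClosed K :=
    hφc.preimage_isClosed_of_isClosed isClosed_Icc (isOpen_Ioo.isClosed_compl)
  have hKbdd : BddBelow K := ⟨r₀, fun x hx => hx.1.1⟩
  set r₁ := sInf K with hr₁def
  have hr₁K : r₁ ∈ K := hKcl.csInf_mem hKne hKbdd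
  have hr₁Icc : r₁ ∈ Icc r₀ rb := hr₁K.1
  have hφr₁ : φ r₁ ∉ Ioo 0 (π / 2) := hr₁K.2
  have hr₁R : (r₁ : EReal) < R := hcoe r₁ hr₁Icc.2
  have hr₀r₁ : r₀ < r₁ := by
    rcases lt_or_eq_of_le hr₁Icc.1 with h | h
    · exact h
    · exact absurd (h ▸ hφ0) hφr₁
  have hr₁pos : 0 < r₁ := lt_trans hr₀ hr₀r₁
  -- before r₁ the solution is in the quadrant
  have hlt : ∀ r ∈ Ico r₀ r₁, φ r ∈ Ioo 0 (π / 2) := by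
    intro r hr
    by_contra hbad'
    exact absurd (csInf_le hKbdd ⟨⟨hr.1, le_trans hr.2.le hr₁Icc.2⟩, hbad'⟩)
      (not_le.mpr hr.2)
  -- left limit at r₁
  have hφcont : ContinuousAt φ r₁ := (hφode r₁ hr₁Icc.1 hr₁R).continuousAt
  have ht : Tendsto φ (𝓝[<] r₁) (𝓝 (φ r₁)) :=
    hφcont.tendsto.mono_left nhdsWithin_le_nhds
  have hIoo_mem : Ioo r₀ r₁ ∈ 𝓝[<] r₁ := Ioo_mem_nhdsLT_of_mem ⟨hr₀r₁, le_rfl⟩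
  have hev : ∀ᶠ r in 𝓝[<] r₁, φ r ∈ Icc 0 (π / 2) := by
    filter_upwards [hIoo_mem] with r hr
    exact Ioo_subset_Icc_self (hlt r ⟨hr.1.le, hr.2⟩)
  have hφr₁Icc : φ r₁ ∈ Icc 0 (π / 2) := isClosed_Icc.mem_of_tendsto ht hev
  have hφr₁cases : φ r₁ = 0 ∨ φ r₁ = π / 2 := by
    rcases eq_or_lt_of_le hφr₁Icc.1 with h | h
    · exact Or.inl h.symm
    rcases eq_or_lt_of_le hφr₁Icc.2 with h' | h'
    · exact Or.inr h'
    · exact absurd ⟨h, h'⟩ hφr₁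
  -- compact interval J and bounds
  set J : Set ℝ := Icc r₀ r₁ with hJdef
  have hJsub : J ⊆ Ioi (0:ℝ) := fun x hx => lt_of_lt_of_le hr₀ hx.1
  have hJne : J.Nonempty := ⟨r₀, le_rfl, hr₀r₁.le⟩
  have hJc : IsCompact J := isCompact_Icc
  have hξcJ : ContinuousOn ξ J := fun r hr =>
    ((hξd r (hJsub hr)).continuousAt).continuousWithinAt
  have hχcJ : ContinuousOn χ J := fun r hr =>
    ((hχd r (hJsub hr)).continuousAt).continuousWithinAt
  have hξne : ∀ r ∈ J, ξ r ≠ 0 := fun r hr => (hξpos r (hJsub hr)).ne'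
  have hχne : ∀ r ∈ J, χ r ≠ 0 := fun r hr => (hχpos r (hJsub hr)).ne'
  have hScont : ContinuousOn S J := by
    apply ContinuousOn.mul
    · exact (continuousOn_const.mul ((hχ'c.mono hJsub).div hχcJ hχne)).add
        (continuousOn_const.mul ((hξ'c.mono hJsub).div hξcJ hξne))
    · exact ((hξ'c.mono hJsub).div hξcJ hξne).pow _
  obtain ⟨rM, hrM, hSmax⟩ := hJc.exists_isMaxOn hJne hScont
  obtain ⟨rm', hrm', hSmin⟩ := hJc.exists_isMinOn hJne hScont
  have hSminpos : 0 < S rm' := hSpos rm' (hJsub hrm')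
  obtain ⟨rcm, hrcm, hχmin⟩ := hJc.exists_isMinOn hJne hχcJ
  obtain ⟨rcM, hrcM, hχmax⟩ := hJc.exists_isMaxOn hJne hχcJ
  have hχminpos : 0 < χ rcm := hχpos rcm (hJsub hrcm)
  set a₀ : ℝ := (c * χ rcm) ^ (1/α) with ha₀def
  set a₁ : ℝ := (c * χ rcM) ^ (1/α) with ha₁def
  have ha₀pos : 0 < a₀ := Real.rpow_pos_of_pos (mul_pos hc hχminpos) _
  have ha₁pos : 0 < a₁ := Real.rpow_pos_of_pos (mul_pos hc
    (lt_of_lt_of_le hχminpos (hχmin hrcM))) _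
  have hA_bounds : ∀ r ∈ J, a₀ ≤ (c * χ r) ^ (1/α) ∧ (c * χ r) ^ (1/α) ≤ a₁ := by
    intro r hr
    constructor
    · exact Real.rpow_le_rpow (mul_pos hc hχminpos).le
        (mul_le_mul_of_nonneg_left (hχmin hr) hc.le) hp0
    · exact Real.rpow_le_rpow (mul_pos hc (hχpos r (hJsub hr))).le
        (mul_le_mul_of_nonneg_left (hχmax hr) hc.le) hp0
  -- the generic positivity of the prefactor
  have hKfac : ∀ r ∈ J, 0 < (((n - 1).choose (m - 1) : ℝ))⁻¹ * (ξ r / ξ' r) ^ (m - 1) :=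
    fun r hr => mul_pos (inv_pos.mpr hCm)
      (pow_pos (div_pos (hξpos r (hJsub hr)) (hξ'pos r (hJsub hr))) _)
  rcases hφr₁cases with hzero | hhalf
  · -- case φ r₁ = 0 : solution increases near r₁, contradiction
    set ε : ℝ := min 1 (min (π/3) (a₀ * (1/2:ℝ)^(1/α) / (S rM + 1))) with hεdef
    have hB : 0 < a₀ * (1/2:ℝ)^(1/α) := mul_pos ha₀pos (Real.rpow_pos_of_pos one_half_pos _)
    have hSMpos : 0 < S rM + 1 := by
      have := lt_of_lt_of_le hSminpos (hSmin hrM); linarith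
    have hεpos : 0 < ε := lt_min one_pos (lt_min (by positivity) (by positivity))
    have hε1 : ε ≤ 1 := min_le_left _ _
    have hεpi3 : ε ≤ π/3 := le_trans (min_le_right _ _) (min_le_left _ _)
    have hεS : ε ≤ a₀ * (1/2:ℝ)^(1/α) / (S rM + 1) :=
      le_trans (min_le_right _ _) (min_le_right _ _)
    -- find r₂
    have hsmem : {r | φ r < ε} ∈ 𝓝[<] r₁ := ht (by
      rw [hzero]; exact Iio_mem_nhds hεpos)
    obtain ⟨r₂, hr₂Ioo, hr₂s, hsub⟩ := exists_left_interval hr₀r₁ hsmem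
    -- strict monotonicity on [r₂, r₁]
    have hmono : StrictMonoOn φ (Icc r₂ r₁) := by
      apply strictMonoOn_of_deriv_pos (convex_Icc _ _)
      · exact hφc.mono (Icc_subset_Icc hr₂Ioo.1.le hr₁Icc.2)
      · intro r hr
        rw [interior_Icc] at hr
        have hrJ : r ∈ J := ⟨le_trans hr₂Ioo.1.le hr.1.le, hr.2.le⟩
        have hrIoo : r ∈ Ioo r₀ r₁ := (hsub hr).2
        have hφε : φ r < ε := (hsub hr).1
        have hφmem : φ r ∈ Ioo 0 (π/2) := hlt r ⟨hrIoo.1.le, hrIoo.2⟩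
        rw [(hφode r hrIoo.1.le (hcoe r (le_trans hr.2.le hr₁Icc.2))).deriv]
        have htan : 0 < Real.tan (φ r) :=
          Real.tan_pos_of_pos_of_lt_pi_div_two hφmem.1 hφmem.2
        have hsinpos : 0 < Real.sin (φ r) :=
          Real.sin_pos_of_pos_of_lt_pi hφmem.1 (lt_trans hφmem.2 (by linarith [pi_pos]))
        have hsinm : 0 < Real.sin (φ r) ^ m := pow_pos hsinpos m
        have hsinlt : Real.sin (φ r) ≤ ε := ((Real.sin_lt hφmem.1).trans hφε).le
        have hsinm_le : Real.sin (φ r) ^ m ≤ ε ^ m := pow_le_pow_left₀ hsinpos.le hsinlt m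
        have hcos : (1/2:ℝ) ≤ Real.cos (φ r) := by
          have h1 : φ r ≤ π/3 := (lt_of_lt_of_le hφε hεpi3).le
          calc (1/2:ℝ) = Real.cos (π/3) := (Real.cos_pi_div_three).symm
            _ ≤ Real.cos (φ r) :=
              Real.cos_le_cos_of_nonneg_of_le_pi hφmem.1.le (by linarith [pi_pos]) h1
        have hcosp : (1/2:ℝ)^(1/α) ≤ Real.cos (φ r) ^ (1/α) :=
          Real.rpow_le_rpow (by norm_num) hcos hp0
        have hεm : ε ^ m ≤ ε := pow_le_of_le_one hεpos.le hε1 hmpos.ne'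
        have hεmpos : 0 < ε ^ m := pow_pos hεpos m
        have c1 : S rM + 1 ≤ a₀ * (1/2:ℝ)^(1/α) / ε := by
          rw [le_div_iff₀ hεpos]
          have h2 := (le_div_iff₀ hSMpos).mp hεS
          nlinarith
        have c2 : a₀ * (1/2:ℝ)^(1/α) / ε ≤ a₀ * (1/2:ℝ)^(1/α) / ε ^ m := by
          gcongr

        have c3 : a₀ * (1/2:ℝ)^(1/α) / ε ^ m ≤
            (c * χ r) ^ (1/α) * Real.cos (φ r) ^ (1/α) / Real.sin (φ r) ^ m := by
          have hApos : 0 < (c * χ r) ^ (1/α) :=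
            Real.rpow_pos_of_pos (mul_pos hc (hχpos r (hJsub hrJ))) _
          have hcosppos : 0 ≤ Real.cos (φ r) ^ (1/α) := by positivity
          exact div_le_div₀ (mul_nonneg hApos.le hcosppos)
            (mul_le_mul (hA_bounds r hrJ).1 hcosp (by positivity) hApos.le)
            hsinm hsinm_le
        have hSr : S r ≤ S rM := hSmax hrJ
        have hbr : 0 < (c * χ r) ^ (1/α) * Real.cos (φ r) ^ (1/α) / Real.sin (φ r) ^ m
            - S r := by linarith
        exact mul_pos (mul_pos (hKfac r hrJ) htan) hbr
    have h1 : φ r₂ < φ r₁ := hmono ⟨le_rfl, hr₂Ioo.2.le⟩ ⟨hr₂Ioo.2.le, le_rfl⟩ hr₂Ioo.2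
    have h2 : 0 < φ r₂ := (hlt r₂ ⟨hr₂Ioo.1.le, hr₂Ioo.2⟩).1
    rw [hzero] at h1; linarith
  · -- case φ r₁ = π/2 : solution decreases near r₁, contradiction
    set ε : ℝ := min (π/4) (S rm' / (a₁ * 2^m + 1)) with hεdef
    have hx : (0:ℝ) < a₁ * 2^m + 1 := by positivity
    have hεpos : 0 < ε := lt_min (by positivity) (by positivity)
    have hεpi4 : ε ≤ π/4 := min_le_left _ _
    have hεS : ε ≤ S rm' / (a₁ * 2^m + 1) := min_le_right _ _
    have hsmem : {r | π/2 - ε < φ r} ∈ 𝓝[<] r₁ := ht (by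
      rw [hhalf]; exact Ioi_mem_nhds (by linarith))
    obtain ⟨r₂, hr₂Ioo, hr₂s, hsub⟩ := exists_left_interval hr₀r₁ hsmem
    have hanti : StrictAntiOn φ (Icc r₂ r₁) := by
      apply strictAntiOn_of_deriv_neg (convex_Icc _ _)
      · exact hφc.mono (Icc_subset_Icc hr₂Ioo.1.le hr₁Icc.2)
      · intro r hr
        rw [interior_Icc] at hr
        have hrJ : r ∈ J := ⟨le_trans hr₂Ioo.1.le hr.1.le, hr.2.le⟩
        have hrIoo : r ∈ Ioo r₀ r₁ := (hsub hr).2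
        have hφε : π/2 - ε < φ r := (hsub hr).1
        have hφmem : φ r ∈ Ioo 0 (π/2) := hlt r ⟨hrIoo.1.le, hrIoo.2⟩
        rw [(hφode r hrIoo.1.le (hcoe r (le_trans hr.2.le hr₁Icc.2))).deriv]
        have htan : 0 < Real.tan (φ r) :=
          Real.tan_pos_of_pos_of_lt_pi_div_two hφmem.1 hφmem.2
        have hcospos : 0 < Real.cos (φ r) :=
          Real.cos_pos_of_mem_Ioo ⟨by linarith [hφmem.1, pi_pos], hφmem.2⟩
        have hcoslt : Real.cos (φ r) < ε := by
          have h0 : (0:ℝ) < π/2 - φ r := by linarith [hφmem.2]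
          calc Real.cos (φ r) = Real.sin (π/2 - φ r) := (Real.sin_pi_div_two_sub _).symm
            _ < π/2 - φ r := Real.sin_lt h0
            _ < ε := by linarith
        have hcosp_le : Real.cos (φ r) ^ (1/α) ≤ Real.cos (φ r) := by
          have h := Real.rpow_le_rpow_of_exponent_ge hcospos (Real.cos_le_one _) hp1
          rwa [Real.rpow_one] at h
        have hsin : (1/2:ℝ) ≤ Real.sin (φ r) := by
          have h1 : π/2 - φ r ≤ π/3 := by linarith [hεpi4, pi_pos]
          calc (1/2:ℝ) = Real.cos (π/3) := (Real.cos_pi_div_three).symm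
            _ ≤ Real.cos (π/2 - φ r) := Real.cos_le_cos_of_nonneg_of_le_pi
                (by linarith [hφmem.2]) (by linarith [pi_pos]) h1
            _ = Real.sin (φ r) := Real.cos_pi_div_two_sub _
        have hsinm : (1/2:ℝ)^m ≤ Real.sin (φ r) ^ m :=
          pow_le_pow_left₀ (by norm_num) hsin m
        have hAle : (c * χ r) ^ (1/α) ≤ a₁ := (hA_bounds r hrJ).2
        have hcosp_nonneg : 0 ≤ Real.cos (φ r) ^ (1/α) := Real.rpow_nonneg hcospos.le _
        have c1 : (c * χ r) ^ (1/α) * Real.cos (φ r) ^ (1/α) / Real.sin (φ r) ^ m ≤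
            a₁ * ε / (1/2:ℝ)^m :=
          div_le_div₀ (by positivity)
            (mul_le_mul hAle (le_of_lt (lt_of_le_of_lt hcosp_le hcoslt))
              hcosp_nonneg ha₁pos.le)
            (by positivity) hsinm
        have c2 : a₁ * ε / (1/2:ℝ)^m = a₁ * 2^m * ε := by
          rw [one_div, inv_pow, div_eq_mul_inv, inv_inv]; ring
        have c3 : a₁ * 2^m * ε < S rm' := by
          have h2 := (le_div_iff₀ hx).mp hεS
          nlinarith [hεpos]
        have hSr : S rm' ≤ S r := hSmin hrJ
        have hbr : (c * χ r) ^ (1/α) * Real.cos (φ r) ^ (1/α) / Real.sin (φ r) ^ m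
            - S r < 0 := by
          rw [c2] at c1; linarith
        exact mul_neg_of_pos_of_neg (mul_pos (hKfac r hrJ) htan) hbr
    have h1 : φ r₁ < φ r₂ := hanti ⟨le_rfl, hr₂Ioo.2.le⟩ ⟨hr₂Ioo.2.le, le_rfl⟩ hr₂Ioo.2
    have h2 : φ r₂ < π/2 := (hlt r₂ ⟨hr₂Ioo.1.le, hr₂Ioo.2⟩).2
    rw [hhalf] at h1; linarith
end

section
/- Let n ≥ 2 be an integer, c > 0, and let ξ, χ : (0, ∞) → ℝ be continuously differentiable with ξ(r) > 0, ξ'(r) > 0, χ(r) > 0 and χ'(r) ≥ 0 for all r. Fix r₀ > 0 and suppose that ∫_{r₀}^{∞} (ξ(ρ)/ξ'(ρ))^{n−1} χ(ρ) dρ = +∞. Then there is no differentiable function φ : [r₀, ∞) → (π/2, π) satisfying, for all r ≥ r₀, the equation φ'(r) = (ξ(r)/ξ'(r))^{n−1} c χ(r) tan φ(r) · [ cos φ(r) / sinⁿ φ(r) − S_n(r)/(c χ(r)) ], where S_n(r) = (χ'(r)/χ(r)) (ξ'(r)/ξ(r))^{n−1}. -/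
open Real Set Filter Topology Asymptotics MeasureTheory

/-- For the Gauss–Kronecker (m = n, α = 1) soliton angle ODE, if
`∫_{r₀}^∞ (ξ/ξ')^{n-1} χ = +∞`, there is no solution `φ : [r₀, ∞) → (π/2, π)`. -/
theorem stmt7 (n : ℕ) (hn : 2 ≤ n) (c : ℝ) (hc : 0 < c)
    (ξ χ ξ' χ' : ℝ → ℝ)
    (hξd : ∀ r ∈ Set.Ioi (0 : ℝ), HasDerivAt ξ (ξ' r) r)
    (hχd : ∀ r ∈ Set.Ioi (0 : ℝ), HasDerivAt χ (χ' r) r)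
    (hξ'c : ContinuousOn ξ' (Set.Ioi 0)) (hχ'c : ContinuousOn χ' (Set.Ioi 0))
    (hξpos : ∀ r ∈ Set.Ioi (0 : ℝ), 0 < ξ r)
    (hξ'pos : ∀ r ∈ Set.Ioi (0 : ℝ), 0 < ξ' r)
    (hχpos : ∀ r ∈ Set.Ioi (0 : ℝ), 0 < χ r)
    (hχ'nonneg : ∀ r ∈ Set.Ioi (0 : ℝ), 0 ≤ χ' r)
    (r₀ : ℝ) (hr₀ : 0 < r₀)
    (hdiv : Tendsto (fun R => ∫ ρ in r₀..R, (ξ ρ / ξ' ρ) ^ (n - 1) * χ ρ) atTop atTop) :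
    ¬ ∃ φ : ℝ → ℝ,
      (∀ r ∈ Set.Ici r₀, φ r ∈ Set.Ioo (π / 2) π) ∧
      (∀ r ∈ Set.Ici r₀,
        HasDerivAt φ
          ((ξ r / ξ' r) ^ (n - 1) * (c * χ r) * Real.tan (φ r) *
            (Real.cos (φ r) / Real.sin (φ r) ^ n -
              (χ' r / χ r) * (ξ' r / ξ r) ^ (n - 1) / (c * χ r))) r) := by
  rintro ⟨φ, hφmem, hφd⟩
  set f : ℝ → ℝ := fun ρ => (ξ ρ / ξ' ρ) ^ (n - 1) * χ ρ with hf
  set I : ℝ → ℝ := fun R => ∫ ρ in r₀..R, f ρ with hI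
  have hsub : Set.Ici r₀ ⊆ Set.Ioi (0 : ℝ) := fun x hx => lt_of_lt_of_le hr₀ hx
  -- continuity of f on Ioi 0
  have hξc : ContinuousOn ξ (Set.Ioi 0) := fun r hr =>
    ((hξd r hr).continuousAt).continuousWithinAt
  have hχc : ContinuousOn χ (Set.Ioi 0) := fun r hr =>
    ((hχd r hr).continuousAt).continuousWithinAt
  have hfc : ContinuousOn f (Set.Ioi 0) :=
    (((hξc.div hξ'c) fun r hr => (hξ'pos r hr).ne').pow _).mul hχc
  -- derivative of I
  have hId : ∀ R ∈ Set.Ici r₀, HasDerivAt I (f R) R := by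
    intro R hR
    have hRpos : (0 : ℝ) < R := hsub hR
    have hint : IntervalIntegrable f MeasureTheory.volume r₀ R := by
      apply (hfc.mono ?_).intervalIntegrable
      rw [Set.uIcc_of_le hR]
      exact fun x hx => lt_of_lt_of_le hr₀ hx.1
    have hca : ContinuousAt f R := hfc.continuousAt (Ioi_mem_nhds hRpos)
    exact intervalIntegral.integral_hasDerivAt_right hint
      ⟨Set.Ioi 0, Ioi_mem_nhds hRpos, hfc.aestronglyMeasurable measurableSet_Ioi⟩ hca
  -- pointwise key inequality : φ' r ≥ c * f r
  have hkey : ∀ r ∈ Set.Ici r₀,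
      c * f r ≤ ((ξ r / ξ' r) ^ (n - 1) * (c * χ r) * Real.tan (φ r) *
            (Real.cos (φ r) / Real.sin (φ r) ^ n -
              (χ' r / χ r) * (ξ' r / ξ r) ^ (n - 1) / (c * χ r))) := by
    intro r hr
    have hrpos := hsub hr
    obtain ⟨h1, h2⟩ := hφmem r hr
    have hsin : 0 < Real.sin (φ r) :=
      Real.sin_pos_of_pos_of_lt_pi (lt_trans (by positivity) h1) h2
    have hcos : Real.cos (φ r) < 0 :=
      Real.cos_neg_of_pi_div_two_lt_of_lt h1 (by linarith [Real.pi_pos])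
    have hξr := hξpos r hrpos
    have hξ'r := hξ'pos r hrpos
    have hχr := hχpos r hrpos
    have hχ'r := hχ'nonneg r hrpos
    have hfr : 0 < f r := by
      have := div_pos hξr hξ'r
      positivity
    have hsinpow : 0 < Real.sin (φ r) ^ (n - 1) := pow_pos hsin _
    have hsinle : Real.sin (φ r) ^ (n - 1) ≤ 1 :=
      pow_le_one₀ hsin.le (Real.sin_le_one _)
    -- rewrite the RHS
    have hexp : ((ξ r / ξ' r) ^ (n - 1) * (c * χ r) * Real.tan (φ r) *
            (Real.cos (φ r) / Real.sin (φ r) ^ n -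
              (χ' r / χ r) * (ξ' r / ξ r) ^ (n - 1) / (c * χ r)))
        = c * f r / Real.sin (φ r) ^ (n - 1)
            - Real.tan (φ r) * (χ' r / χ r) := by
      rw [Real.tan_eq_sin_div_cos]
      have hsn : Real.sin (φ r) ^ n = Real.sin (φ r) ^ (n - 1) * Real.sin (φ r) := by
        rw [← pow_succ]; congr 1; omega
      rw [hsn]
      have hξne : ξ r ≠ 0 := hξr.ne'
      have hξ'ne : ξ' r ≠ 0 := hξ'r.ne'
      have hχne : χ r ≠ 0 := hχr.ne'
      have hcne : c ≠ 0 := hc.ne'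
      have hsne : Real.sin (φ r) ≠ 0 := hsin.ne'
      have hcosne : Real.cos (φ r) ≠ 0 := hcos.ne
      have hspne : Real.sin (φ r) ^ (n - 1) ≠ 0 := hsinpow.ne'
      have hcancel : ξ' r ^ (n-1) * (ξ' r)⁻¹ ^ (n-1) = 1 := by
        rw [← mul_pow, mul_inv_cancel₀ hξ'ne, one_pow]
      simp only [div_pow]
      field_simp
      linear_combination (-(ξ r ^ (n - 1) * c * χ r ^ 2 * Real.cos (φ r))) * hcancel
    rw [hexp]
    have htan : Real.sin (φ r) / Real.cos (φ r) ≤ 0 :=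
      (div_nonpos_iff.mpr (Or.inl ⟨hsin.le, hcos.le⟩))
    have h2nd : 0 ≤ - (Real.tan (φ r) * (χ' r / χ r)) := by
      rw [Real.tan_eq_sin_div_cos]
      have : 0 ≤ χ' r / χ r := div_nonneg hχ'r hχr.le
      nlinarith
    have h1st : c * f r ≤ c * f r / Real.sin (φ r) ^ (n - 1) :=
      le_div_self (by positivity) hsinpow hsinle
    linarith
  -- h := φ - c • I is monotone on Ici r₀
  set h : ℝ → ℝ := fun R => φ R - c * I R with hh
  have hmono : MonotoneOn h (Set.Ici r₀) := by
    have hderiv : ∀ R ∈ Set.Ici r₀,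
        HasDerivAt h (((ξ R / ξ' R) ^ (n - 1) * (c * χ R) * Real.tan (φ R) *
            (Real.cos (φ R) / Real.sin (φ R) ^ n -
              (χ' R / χ R) * (ξ' R / ξ R) ^ (n - 1) / (c * χ R))) - c * f R) R := by
      intro R hR
      exact (hφd R hR).sub ((hId R hR).const_mul c)
    apply monotoneOn_of_deriv_nonneg (convex_Ici r₀)
    · exact fun R hR => ((hderiv R hR).continuousAt).continuousWithinAt
    · intro R hR
      rw [interior_Ici] at hR
      exact (hderiv R (Set.mem_Ici.mpr (Set.mem_Ioi.mp hR).le)).differentiableAt.differentiableWithinAt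
    · intro R hR
      rw [interior_Ici] at hR
      rw [(hderiv R (Set.mem_Ici.mpr (Set.mem_Ioi.mp hR).le)).deriv]
      have := hkey R (Set.mem_Ici.mpr (Set.mem_Ioi.mp hR).le)
      linarith
  -- conclude
  have hIr₀ : I r₀ = 0 := intervalIntegral.integral_same
  have hcdiv : Tendsto (fun R => c * I R) atTop atTop := hdiv.const_mul_atTop hc
  have hev : ∀ᶠ R in atTop, π ≤ c * I R := hcdiv.eventually_ge_atTop π
  obtain ⟨R, hRr₀, hRπ⟩ := ((eventually_ge_atTop r₀).and hev).exists
  have hm := hmono (Set.self_mem_Ici) hRr₀ hRr₀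
  simp only [hh, hIr₀, mul_zero, sub_zero] at hm
  obtain ⟨ha, hb⟩ := hφmem R hRr₀
  obtain ⟨ha0, _⟩ := hφmem r₀ Set.self_mem_Ici
  have hπ := Real.pi_pos
  linarith
end

section
/- Let n ≥ 3 and 2 ≤ m ≤ n be integers, α = 1 or α = 1/m, and c > 0. Let ξ, χ : (0, ∞) → ℝ be twice continuously differentiable with ξ, ξ', χ > 0, with χ nondecreasing, with r ↦ ξ'(r)/ξ(r) positive and nonincreasing, with r ↦ (ξ'(r)χ'(r))/(ξ(r)χ(r)) nonincreasing, and with S_m(r) > 0 for all r. Define F(r, φ) = C(n−1, m−1) (ξ'(r)/ξ(r))^{m−1} (c χ(r))^{−1/α} · cot φ · [ cos^{1/α} φ / sin^m φ − S_m(r)/(c χ(r))^{1/α} ]^{−1}. Then for every r₀ > 0 there exist ε > 0 and a differentiable function ρ : (0, ε) → (r₀, ∞) such that ρ'(φ) = F(ρ(φ), φ) for all φ ∈ (0, ε) and lim_{φ→0⁺} ρ(φ) = r₀; moreover this ρ is unique in the sense that any two differentiable solutions of this ODE on intervals (0, ε₁), (0, ε₂) with values in (r₀, ∞) and limit r₀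 at 0⁺ coincide on the intersection of their domains. -/
open scoped NNReal
open Real Set Filter Topology Asymptotics

/-- The right-hand side `F(r, φ)` of the soliton orbit equation written with the
angle `φ` as the independent variable. -/
noncomputable def solitonF (n m : ℕ) (α c : ℝ) (ξ ξ' χ χ' : ℝ → ℝ) (r φ : ℝ) : ℝ :=
  ((n - 1).choose (m - 1) : ℝ) * (ξ' r / ξ r) ^ (m - 1) * (c * χ r) ^ (-(1 / α)) *
    (Real.cos φ / Real.sin φ) *
    (Real.cos φ ^ (1 / α) / Real.sin φ ^ m -
      cylSm n m ξ ξ' χ χ' r / (c * χ r) ^ (1 / α))⁻¹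

noncomputable def auxA (n m : ℕ) (α c : ℝ) (ξ ξ' χ : ℝ → ℝ) (r : ℝ) : ℝ :=
  ((n - 1).choose (m - 1) : ℝ) * (ξ' r / ξ r) ^ (m - 1) * (c * χ r) ^ (-(1 / α))

noncomputable def auxB (n m : ℕ) (α c : ℝ) (ξ ξ' χ χ' : ℝ → ℝ) (r : ℝ) : ℝ :=
  cylSm n m ξ ξ' χ χ' r / (c * χ r) ^ (1 / α)

lemma aux_lipschitz_of_contDiffOn {f : ℝ → ℝ} (hf : ContDiffOn ℝ 1 f (Set.Ioi 0))
    {a b : ℝ} (ha : 0 < a) :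
    ∃ K : ℝ≥0, LipschitzOnWith K f (Set.Icc a b) := by
  rcases le_or_gt a b with hab | hab
  · have hsub : Set.Icc a b ⊆ Set.Ioi 0 := fun x hx => lt_of_lt_of_le ha hx.1
    have hdiff : ∀ x ∈ Set.Ioi (0:ℝ), DifferentiableAt ℝ f x := fun x hx =>
      (hf.contDiffAt (isOpen_Ioi.mem_nhds hx)).differentiableAt one_ne_zero
    have hderiv : ContinuousOn (deriv f) (Set.Ioi 0) :=
      hf.continuousOn_deriv_of_isOpen isOpen_Ioi le_rfl
    obtain ⟨M, hM⟩ := (isCompact_Icc (a := a) (b := b)).exists_bound_of_continuousOn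
      (hderiv.mono hsub)
    refine ⟨M.toNNReal, (convex_Icc a b).lipschitzOnWith_of_nnnorm_hasDerivWithin_le
      (fun x hx => ((hdiff x (hsub hx)).hasDerivAt).hasDerivWithinAt) (fun x hx => ?_)⟩
    have h1 : ‖deriv f x‖ ≤ M := hM x hx
    have : ‖deriv f x‖ ≤ M.toNNReal := h1.trans (Real.le_coe_toNNReal M)
    exact_mod_cast this
  · refine ⟨1, ?_⟩
    rw [Set.Icc_eq_empty (by linarith)]
    exact lipschitzOnWith_empty _ _

lemma aux_alg {m : ℕ} (hm : 2 ≤ m) (a b X s co : ℝ) :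
    a * (co / s) * (X / s ^ m - b)⁻¹ = a * (co * s ^ (m - 1)) * (X - b * s ^ m)⁻¹ := by
  rcases eq_or_ne s 0 with hs | hs
  · subst hs
    rw [div_zero, zero_pow (by omega : m - 1 ≠ 0)]
    ring
  · have h1 : X / s ^ m - b = (X - b * s ^ m) / s ^ m := by
      field_simp
    have h2 : s ^ m = s * s ^ (m - 1) := by
      conv_lhs => rw [show m = 1 + (m-1) by omega]
      rw [pow_add, pow_one]
    rw [h1, inv_div, h2]
    rw [div_eq_mul_inv co s, div_eq_mul_inv]
    have h4 : a * (co * s⁻¹) * (s * s ^ (m - 1) * (X - b * (s * s ^ (m - 1)))⁻¹)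
        = a * (co * s ^ (m - 1)) * (X - b * (s * s ^ (m - 1)))⁻¹ * (s⁻¹ * s) := by ring
    rw [h4, inv_mul_cancel₀ hs, mul_one]

lemma aux_denom_near_zero (m k : ℕ) (hm : 1 ≤ m) (MB : ℝ) :
    ∃ δ > (0:ℝ), ∀ b t : ℝ, |b| ≤ MB → |t| ≤ δ → 1/2 ≤ Real.cos t ^ k - b * Real.sin t ^ m := by
  set M := max MB 0 with hM
  set g : ℝ → ℝ := fun t => |Real.cos t ^ k - 1| + M * |Real.sin t| ^ m with hg
  have hgc : Continuous g := by
    apply Continuous.add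
    · exact (((Real.continuous_cos.pow k).sub continuous_const).abs)
    · exact continuous_const.mul ((Real.continuous_sin.abs).pow m)
  have hg0 : g 0 = 0 := by simp [hg, zero_pow (by omega : m ≠ 0)]
  have :=
    Metric.continuousAt_iff.1 (hgc.continuousAt (x := 0)) (1/2) (by norm_num)
  obtain ⟨δ, hδ, hδ'⟩ := this
  refine ⟨δ/2, by positivity, fun b t hb ht => ?_⟩
  have h1 : g t < 1/2 := by
    have : dist t 0 < δ := by
      rw [Real.dist_eq, sub_zero]; linarith [abs_nonneg t]
    have := hδ' this
    rwa [hg0, dist_zero_right, Real.norm_eq_abs, abs_of_nonneg (by positivity)] at this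
  have h2 : b * Real.sin t ^ m ≤ M * |Real.sin t| ^ m := by
    calc b * Real.sin t ^ m ≤ |b * Real.sin t ^ m| := le_abs_self _
    _ = |b| * |Real.sin t| ^ m := by rw [abs_mul, abs_pow]
    _ ≤ M * |Real.sin t| ^ m := by
        apply mul_le_mul_of_nonneg_right (hb.trans (le_max_left _ _)) (by positivity)
  have h3 := neg_abs_le (Real.cos t ^ k - 1)
  linarith [h1, h2, h3]

lemma aux_unif_lip (m k : ℕ) (A B : ℝ → ℝ) {s I : Set ℝ}
    {KA KB : ℝ≥0} (hA : LipschitzOnWith KA A s) (hB : LipschitzOnWith KB B s)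
    {MA : ℝ} (hMA : ∀ r ∈ s, |A r| ≤ MA) (hMA0 : 0 ≤ MA)
    {η : ℝ} (hη : 0 < η)
    (hD : ∀ r ∈ s, ∀ t ∈ I, η ≤ |Real.cos t ^ k - B r * Real.sin t ^ m|) :
    ∃ K : ℝ≥0, ∀ t ∈ I, LipschitzOnWith K
      (fun r => A r * (Real.cos t * Real.sin t ^ (m - 1)) *
        (Real.cos t ^ k - B r * Real.sin t ^ m)⁻¹) s := by
  set K0 : ℝ := KA / η + MA * KB / η ^ 2 with hK0
  have hK0nn : 0 ≤ K0 := by positivity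
  refine ⟨K0.toNNReal, fun t ht => ?_⟩
  rw [lipschitzOnWith_iff_dist_le_mul]
  intro x hx y hy
  set Dx := Real.cos t ^ k - B x * Real.sin t ^ m with hDx
  set Dy := Real.cos t ^ k - B y * Real.sin t ^ m with hDy
  have hDxη : η ≤ |Dx| := hD x hx t ht
  have hDyη : η ≤ |Dy| := hD y hy t ht
  have hDx0 : Dx ≠ 0 := fun h => by rw [h] at hDxη; simp at hDxη; linarith
  have hDy0 : Dy ≠ 0 := fun h => by rw [h] at hDyη; simp at hDyη; linarith
  have hAB : |A x - A y| ≤ (KA : ℝ) * |x - y| := by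
    have := hA.dist_le_mul x hx y hy
    rwa [Real.dist_eq, Real.dist_eq] at this
  have hBB : |B x - B y| ≤ (KB : ℝ) * |x - y| := by
    have := hB.dist_le_mul x hx y hy
    rwa [Real.dist_eq, Real.dist_eq] at this
  have hsin : |Real.sin t ^ m| ≤ 1 := by
    rw [abs_pow]; exact pow_le_one₀ (abs_nonneg _) (Real.abs_sin_le_one t)
  have hcs : |Real.cos t * Real.sin t ^ (m - 1)| ≤ 1 := by
    rw [abs_mul, abs_pow]
    exact mul_le_one₀ (Real.abs_cos_le_one t)
      (by positivity) (pow_le_one₀ (abs_nonneg _) (Real.abs_sin_le_one t))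
  have hDdiff : |Dx - Dy| ≤ (KB : ℝ) * |x - y| := by
    have : Dx - Dy = -((B x - B y) * Real.sin t ^ m) := by rw [hDx, hDy]; ring
    rw [this, abs_neg, abs_mul]
    calc |B x - B y| * |Real.sin t ^ m| ≤ ((KB:ℝ) * |x - y|) * 1 :=
          mul_le_mul hBB hsin (abs_nonneg _) (by positivity)
    _ = (KB:ℝ) * |x - y| := by ring
  have hinvdiff : |Dx⁻¹ - Dy⁻¹| ≤ (KB : ℝ) * |x - y| / η ^ 2 := by
    have h1 : Dx⁻¹ - Dy⁻¹ = (Dy - Dx) * Dx⁻¹ * Dy⁻¹ := by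
      field_simp
    rw [h1, abs_mul, abs_mul, abs_inv, abs_inv]
    have h2 : |Dy - Dx| ≤ (KB:ℝ) * |x - y| := by rwa [abs_sub_comm]
    have h3 : |Dx|⁻¹ ≤ η⁻¹ := inv_anti₀ hη hDxη
    have h4 : |Dy|⁻¹ ≤ η⁻¹ := inv_anti₀ hη hDyη
    calc |Dy - Dx| * |Dx|⁻¹ * |Dy|⁻¹ ≤ ((KB:ℝ) * |x - y|) * η⁻¹ * η⁻¹ := by
          apply mul_le_mul (mul_le_mul h2 h3 (by positivity) (by positivity)) h4 (by positivity)
          positivity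
    _ = (KB:ℝ) * |x - y| / η ^ 2 := by rw [sq]; field_simp
  have hAy : |A y| ≤ MA := hMA y hy
  have hinvx : |Dx⁻¹| ≤ η⁻¹ := by rw [abs_inv]; exact inv_anti₀ hη hDxη
  rw [Real.dist_eq, Real.dist_eq]
  have key : A x * (Real.cos t * Real.sin t ^ (m - 1)) * Dx⁻¹ -
      A y * (Real.cos t * Real.sin t ^ (m - 1)) * Dy⁻¹ =
      (Real.cos t * Real.sin t ^ (m - 1)) * ((A x - A y) * Dx⁻¹ + A y * (Dx⁻¹ - Dy⁻¹)) := by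
    ring
  rw [key, abs_mul]
  have hsum : |(A x - A y) * Dx⁻¹ + A y * (Dx⁻¹ - Dy⁻¹)| ≤ K0 * |x - y| := by
    calc |(A x - A y) * Dx⁻¹ + A y * (Dx⁻¹ - Dy⁻¹)|
        ≤ |(A x - A y) * Dx⁻¹| + |A y * (Dx⁻¹ - Dy⁻¹)| := abs_add_le _ _
    _ = |A x - A y| * |Dx⁻¹| + |A y| * |Dx⁻¹ - Dy⁻¹| := by rw [abs_mul, abs_mul]
    _ ≤ ((KA:ℝ) * |x - y|) * η⁻¹ + MA * ((KB : ℝ) * |x - y| / η ^ 2) := by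
        apply add_le_add
        · exact mul_le_mul hAB hinvx (abs_nonneg _) (by positivity)
        · exact mul_le_mul hAy hinvdiff (abs_nonneg _) hMA0
    _ = K0 * |x - y| := by rw [hK0]; field_simp
  calc |Real.cos t * Real.sin t ^ (m - 1)| * |(A x - A y) * Dx⁻¹ + A y * (Dx⁻¹ - Dy⁻¹)|
      ≤ 1 * (K0 * |x - y|) := mul_le_mul hcs hsum (abs_nonneg _) one_pos.le
  _ = K0 * |x - y| := by ring
  _ ≤ (K0.toNNReal : ℝ) * |x - y| := by
      apply mul_le_mul_of_nonneg_right (Real.le_coe_toNNReal K0) (abs_nonneg _)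

lemma aux_no_blowup {ρ d : ℝ → ℝ} {a b t₀ : ℝ} (hat : a < t₀) (htb : t₀ < b)
    (hd : ∀ t ∈ Set.Ioo a b, HasDerivAt ρ (d t) t)
    (hblow : Tendsto (fun t => |d t|) (𝓝[<] t₀) atTop) : False := by
  have ht₀ : t₀ ∈ Set.Ioo a b := ⟨hat, htb⟩
  have hslope : Tendsto (slope ρ t₀) (𝓝[<] t₀) (𝓝 (d t₀)) := by
    have h1 := hasDerivAt_iff_tendsto_slope.1 (hd t₀ ht₀)
    exact h1.mono_left (nhdsWithin_mono _ (fun x hx => ne_of_lt hx))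
  set L : ℝ := |d t₀| + 1 with hL
  have hev1 : ∀ᶠ t in 𝓝[<] t₀, |slope ρ t₀ t| < L := by
    have := hslope.abs.eventually_lt_const (by rw [hL]; linarith : |d t₀| < L)
    exact this
  have hev2 : ∀ᶠ t in 𝓝[<] t₀, L < |d t| := hblow.eventually_gt_atTop L
  have hev3 : ∀ᶠ t in 𝓝[<] t₀, t ∈ Set.Ioo a t₀ :=
    Filter.eventually_of_mem (Ioo_mem_nhdsLT_of_mem ⟨hat, le_rfl⟩) (fun x hx => hx)
  obtain ⟨u, hu, hsub⟩ := mem_nhdsLT_iff_exists_Ioo_subset.1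
    ((hev1.and (hev2.and hev3)).filter_mono le_rfl)
  -- pick t ∈ Ioo (max u a) t₀
  have hmax : max u a < t₀ := max_lt hu hat
  obtain ⟨t, htmem⟩ := exists_between hmax
  have htIoo : t ∈ Set.Ioo u t₀ := ⟨lt_of_le_of_lt (le_max_left u a) htmem.1, htmem.2⟩
  obtain ⟨hslopet, hdt, htab⟩ := hsub htIoo
  -- MVT on [t, t₀]
  have hcont : ContinuousOn ρ (Set.Icc t t₀) := by
    intro x hx
    have hxab : x ∈ Set.Ioo a b :=
      ⟨lt_of_lt_of_le (lt_of_le_of_lt (le_max_right u a) htmem.1) hx.1,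
        lt_of_le_of_lt hx.2 htb⟩
    exact ((hd x hxab).continuousAt).continuousWithinAt
  have hderivOn : ∀ x ∈ Set.Ioo t t₀, HasDerivAt ρ (d x) x := fun x hx =>
    hd x ⟨lt_trans htab.1 hx.1, lt_trans hx.2 htb⟩
  obtain ⟨θ, hθmem, hθ⟩ := exists_hasDerivAt_eq_slope ρ d htmem.2 hcont hderivOn
  have hθE : θ ∈ Set.Ioo u t₀ := ⟨lt_trans htIoo.1 hθmem.1, hθmem.2⟩
  obtain ⟨_, hdθ, _⟩ := hsub hθE
  -- d θ equals slope ρ t₀ t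
  have hslopeval : slope ρ t₀ t = d θ := by
    rw [hθ, slope_def_field]
    have hne : t - t₀ ≠ 0 := sub_ne_zero.2 (ne_of_lt htmem.2)
    have hne' : t₀ - t ≠ 0 := sub_ne_zero.2 (ne_of_gt htmem.2)
    field_simp
    ring
  rw [hslopeval] at hslopet
  linarith

lemma aux_e_ne_zero (m k : ℕ) (hm : 2 ≤ m) (hk : 1 ≤ k)
    (A B : ℝ → ℝ)
    (hAcont : ContinuousOn A (Set.Ioi 0))
    (hBcont : ContinuousOn B (Set.Ioi 0))
    (hApos : ∀ r ∈ Set.Ioi (0:ℝ), 0 < A r) (hBpos : ∀ r ∈ Set.Ioi (0:ℝ), 0 < B r)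
    {r₀ ε₁ : ℝ} (hr₀ : 0 < r₀) {ρ : ℝ → ℝ}
    (hmem : ∀ t ∈ Set.Ioo 0 ε₁, ρ t ∈ Set.Ioi r₀)
    (hd : ∀ t ∈ Set.Ioo 0 ε₁, HasDerivAt ρ
      (A (ρ t) * (Real.cos t * Real.sin t ^ (m-1)) *
        (Real.cos t ^ k - B (ρ t) * Real.sin t ^ m)⁻¹) t)
    (hlim : Tendsto ρ (𝓝[>] 0) (𝓝 r₀)) :
    ∀ t ∈ Set.Ioo 0 ε₁, Real.cos t ^ k - B (ρ t) * Real.sin t ^ m ≠ 0 := by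
  set e : ℝ → ℝ := fun t => Real.cos t ^ k - B (ρ t) * Real.sin t ^ m with he
  set num : ℝ → ℝ := fun t => A (ρ t) * (Real.cos t * Real.sin t ^ (m-1)) with hnum
  clear_value e num
  have hρpos : ∀ t ∈ Set.Ioo 0 ε₁, (0:ℝ) < ρ t := fun t ht => lt_trans hr₀ (hmem t ht)
  have hρcont : ∀ t ∈ Set.Ioo 0 ε₁, ContinuousAt ρ t :=
    fun t ht => (hd t ht).continuousAt
  have hBρ : ∀ t ∈ Set.Ioo 0 ε₁, ContinuousAt (fun t => B (ρ t)) t := fun t ht =>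
    (hBcont.continuousAt (isOpen_Ioi.mem_nhds (hρpos t ht))).comp (hρcont t ht)
  have hecont : ∀ t ∈ Set.Ioo 0 ε₁, ContinuousAt e t := fun t ht => by
    rw [he]
    exact ((Real.continuous_cos.pow k).continuousAt).sub
      ((hBρ t ht).mul ((Real.continuous_sin.pow m).continuousAt))
  have hB0 : Tendsto (fun t => B (ρ t)) (𝓝[>] (0:ℝ)) (𝓝 (B r₀)) :=
    (hBcont.continuousAt (isOpen_Ioi.mem_nhds hr₀)).tendsto.comp hlim
  have he0 : Tendsto e (𝓝[>] (0:ℝ)) (𝓝 1) := by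
    have h1 : Tendsto (fun t => Real.cos t ^ k) (𝓝[>] (0:ℝ)) (𝓝 1) := by
      have := ((Real.continuous_cos.pow k).tendsto 0).mono_left
        (nhdsWithin_le_nhds (s := Set.Ioi (0:ℝ)))
      simp only [Pi.pow_apply, Real.cos_zero, one_pow] at this; exact this
    have h2 : Tendsto (fun t => Real.sin t ^ m) (𝓝[>] (0:ℝ)) (𝓝 0) := by
      have := ((Real.continuous_sin.pow m).tendsto 0).mono_left
        (nhdsWithin_le_nhds (s := Set.Ioi (0:ℝ)))
      simp only [Pi.pow_apply, Real.sin_zero, zero_pow (by omega : m ≠ 0)] at this; exact this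
    have h3 := h1.sub (hB0.mul h2)
    rw [he]
    simpa using h3
  have hev : ∀ᶠ t in 𝓝[>] (0:ℝ), 1/2 < e t := he0.eventually_const_lt (by norm_num)
  obtain ⟨δ₀, hδ₀pos, hδ₀⟩ := mem_nhdsGT_iff_exists_Ioc_subset.1 hev
  rw [Set.mem_Ioi] at hδ₀pos
  intro t₁ ht₁ hcon
  have hcon' : e t₁ = 0 := by rw [he]; exact hcon
  set δ' : ℝ := min δ₀ (t₁/2) with hδ'
  have hδ'pos : 0 < δ' := lt_min hδ₀pos (by linarith [ht₁.1])
  have hepos0 : ∀ t ∈ Set.Ioc (0:ℝ) δ', 1/2 < e t := fun t ht => by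
    simpa using hδ₀ ⟨ht.1, le_trans ht.2 (min_le_left _ _)⟩
  have hδ't₁ : δ' < t₁ := lt_of_le_of_lt (min_le_right _ _) (by linarith [ht₁.1])
  set Z : Set ℝ := Set.Icc δ' t₁ ∩ e ⁻¹' {0} with hZ
  have hZsub : Set.Icc δ' t₁ ⊆ Set.Ioo 0 ε₁ := fun x hx =>
    ⟨lt_of_lt_of_le hδ'pos hx.1, lt_of_le_of_lt hx.2 ht₁.2⟩
  have heconts : ContinuousOn e (Set.Icc δ' t₁) := fun x hx =>
    ((hecont x (hZsub hx))).continuousWithinAt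
  have hZclosed : IsClosed Z :=
    heconts.preimage_isClosed_of_isClosed isClosed_Icc isClosed_singleton
  have hZne : Z.Nonempty := ⟨t₁, ⟨le_of_lt hδ't₁, le_rfl⟩, hcon'⟩
  have hZbdd : BddBelow Z := ⟨δ', fun x hx => hx.1.1⟩
  set t₀ := sInf Z with ht₀def
  have ht₀Z : t₀ ∈ Z := hZclosed.csInf_mem hZne hZbdd
  have het₀ : e t₀ = 0 := ht₀Z.2
  have ht₀mem : t₀ ∈ Set.Ioo 0 ε₁ := hZsub ht₀Z.1
  have ht₀δ' : δ' < t₀ := by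
    rcases eq_or_lt_of_le ht₀Z.1.1 with h | h
    · exfalso
      have h2 := hepos0 t₀ ⟨by rw [← h]; exact hδ'pos, le_of_eq h.symm⟩
      rw [het₀] at h2; linarith
    · exact h
  have hmin : ∀ s ∈ Set.Ico δ' t₀, e s ≠ 0 := fun s hs hzero =>
    absurd (csInf_le hZbdd ⟨⟨hs.1, le_trans (le_of_lt hs.2) ht₀Z.1.2⟩, hzero⟩)
      (not_le.2 hs.2)
  have hepos : ∀ s ∈ Set.Ioo (0:ℝ) t₀, 0 < e s := by
    intro s hs
    rcases le_or_gt s δ' with h | h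
    · have h5 : 1/2 < e s := hepos0 s ⟨hs.1, h⟩
      linarith
    · by_contra hneg
      push_neg at hneg
      have hne := hmin s ⟨le_of_lt h, hs.2⟩
      have hlt : e s < 0 := lt_of_le_of_ne hneg hne
      have hsub2 : Set.Icc δ' s ⊆ Set.Ioo 0 ε₁ := fun x hx =>
        ⟨lt_of_lt_of_le hδ'pos hx.1,
          lt_of_le_of_lt hx.2 (lt_trans (lt_of_lt_of_le hs.2 ht₀Z.1.2) ht₁.2)⟩
      have hc2 : ContinuousOn e (Set.Icc δ' s) := fun x hx =>
        (hecont x (hsub2 hx)).continuousWithinAt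
      have h6 : 1/2 < e δ' := hepos0 δ' ⟨hδ'pos, le_rfl⟩
      have h0mem : (0:ℝ) ∈ Set.Icc (e s) (e δ') := ⟨le_of_lt hlt, by linarith⟩
      obtain ⟨z, hzmem, hz⟩ := intermediate_value_Icc' (le_of_lt h) hc2 h0mem
      exact hmin z ⟨hzmem.1, lt_of_le_of_lt hzmem.2 hs.2⟩ hz
  have hsin : Real.sin t₀ ≠ 0 := by
    intro hs0
    have hpy := Real.sin_sq_add_cos_sq t₀
    have hc0 : Real.cos t₀ ≠ 0 := by
      intro hc; rw [hs0, hc] at hpy; norm_num at hpy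
    have : e t₀ = Real.cos t₀ ^ k := by
      simp only [he, hs0, zero_pow (by omega : m ≠ 0), mul_zero, sub_zero]
    rw [het₀] at this
    exact (pow_ne_zero k hc0) this.symm
  have hcos : Real.cos t₀ ≠ 0 := by
    intro hc0
    have : e t₀ = -(B (ρ t₀) * Real.sin t₀ ^ m) := by
      simp only [he, hc0, zero_pow (by omega : k ≠ 0), zero_sub]
    rw [het₀] at this
    have hB := hBpos (ρ t₀) (Set.mem_Ioi.2 (hρpos t₀ ht₀mem))
    exact (mul_ne_zero (ne_of_gt hB) (pow_ne_zero m hsin)) (neg_eq_zero.1 this.symm)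
  have hnum0 : num t₀ ≠ 0 := by
    simp only [hnum]
    exact mul_ne_zero (ne_of_gt (hApos (ρ t₀) (Set.mem_Ioi.2 (hρpos t₀ ht₀mem))))
      (mul_ne_zero hcos (pow_ne_zero _ hsin))
  have hnumcont : ContinuousAt num t₀ := by
    rw [hnum]
    exact ((hAcont.continuousAt (isOpen_Ioi.mem_nhds (hρpos t₀ ht₀mem))).comp
      (hρcont t₀ ht₀mem)).mul
      ((Real.continuous_cos.mul (Real.continuous_sin.pow (m-1))).continuousAt)
  have hnumtend : Tendsto (fun t => |num t|) (𝓝[<] t₀) (𝓝 |num t₀|) :=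
    (hnumcont.tendsto.mono_left (nhdsWithin_le_nhds (s := Set.Iio t₀))).abs
  have hetend : Tendsto e (𝓝[<] t₀) (𝓝[>] 0) := by
    have h1 : Tendsto e (𝓝[<] t₀) (𝓝 0) := by
      rw [← het₀]
      exact (hecont t₀ ht₀mem).tendsto.mono_left (nhdsWithin_le_nhds (s := Set.Iio t₀))
    apply tendsto_nhdsWithin_of_tendsto_nhds_of_eventually_within _ h1
    filter_upwards [Ioo_mem_nhdsLT_of_mem (Set.mem_Ioc.2 ⟨ht₀mem.1, le_rfl⟩)] with t ht
    exact hepos t ht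
  have hblow : Tendsto (fun t => |num t * (e t)⁻¹|) (𝓝[<] t₀) atTop := by
    have hinv : Tendsto (fun t => (e t)⁻¹) (𝓝[<] t₀) atTop :=
      tendsto_inv_nhdsGT_zero.comp hetend
    have habs : (0:ℝ) < |num t₀| := abs_pos.2 hnum0
    have hmul := Filter.Tendsto.pos_mul_atTop habs hnumtend hinv
    apply hmul.congr'
    filter_upwards [Ioo_mem_nhdsLT_of_mem (Set.mem_Ioc.2 ⟨ht₀mem.1, le_rfl⟩)] with t ht
    simp only [hnum, abs_mul, abs_inv, abs_of_pos (hepos t ht)]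
  exact aux_no_blowup ht₀mem.1 ht₀mem.2
    (fun t ht => by simpa only [hnum, he] using hd t ht) hblow

lemma aux_exists (m k : ℕ) (hm : 2 ≤ m) (hk : 1 ≤ k) (A B : ℝ → ℝ)
    (hAC1 : ContDiffOn ℝ 1 A (Set.Ioi 0)) (hBC1 : ContDiffOn ℝ 1 B (Set.Ioi 0))
    (hApos : ∀ r ∈ Set.Ioi (0:ℝ), 0 < A r)
    {r₀ : ℝ} (hr₀ : 0 < r₀) :
    ∃ ε > (0:ℝ), ∃ ρ : ℝ → ℝ,
      (∀ φ ∈ Set.Ioo (0:ℝ) ε, ρ φ ∈ Set.Ioi r₀ ∧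
        HasDerivAt ρ (A (ρ φ) * (Real.cos φ * Real.sin φ ^ (m-1)) *
          (Real.cos φ ^ k - B (ρ φ) * Real.sin φ ^ m)⁻¹) φ) ∧
      Filter.Tendsto ρ (𝓝[>] 0) (𝓝 r₀) := by
  obtain ⟨R, hRdef⟩ : ∃ x : ℝ, x = r₀ / 2 := ⟨_, rfl⟩
  have hRpos : 0 < R := by rw [hRdef]; positivity
  have hRlt : R < r₀ := by rw [hRdef]; linarith
  have hsub : Set.Icc (r₀ - R) (r₀ + R) ⊆ Set.Ioi (0:ℝ) := fun x hx => by
    simp only [Set.mem_Ioi]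
    have := hx.1
    linarith
  have hr₀mem : r₀ ∈ Set.Icc (r₀ - R) (r₀ + R) := by
    constructor <;> linarith
  obtain ⟨MA₀, hMA₀⟩ := (isCompact_Icc (a := r₀ - R) (b := r₀ + R)).exists_bound_of_continuousOn
    (hAC1.continuousOn.mono hsub)
  obtain ⟨MB₀, hMB₀⟩ := (isCompact_Icc (a := r₀ - R) (b := r₀ + R)).exists_bound_of_continuousOn
    (hBC1.continuousOn.mono hsub)
  have hMA₀nn : 0 ≤ MA₀ := le_trans (norm_nonneg _) (hMA₀ r₀ hr₀mem)
  obtain ⟨δD, hδD, hD⟩ := aux_denom_near_zero m k (by omega) MB₀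
  have hD' : ∀ r ∈ Set.Icc (r₀ - R) (r₀ + R), ∀ t : ℝ, |t| ≤ δD →
      1/2 ≤ Real.cos t ^ k - B r * Real.sin t ^ m := fun r hr t ht =>
    hD (B r) t (by simpa [Real.norm_eq_abs] using hMB₀ r hr) ht
  obtain ⟨KA, hKA⟩ := aux_lipschitz_of_contDiffOn hAC1
    (show (0:ℝ) < r₀ - R by linarith)
  obtain ⟨KB, hKB⟩ := aux_lipschitz_of_contDiffOn hBC1
    (show (0:ℝ) < r₀ - R by linarith)
  obtain ⟨K, hKlip⟩ := aux_unif_lip m k A B (I := Set.Icc (-δD) δD) hKA hKB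
    (fun r hr => by simpa [Real.norm_eq_abs] using hMA₀ r hr) hMA₀nn
    (by norm_num : (0:ℝ) < 1/2)
    (fun r hr t ht => le_trans (hD' r hr t (abs_le.2 ht)) (le_abs_self _))
  -- projection onto the safety interval
  set proj : ℝ → ℝ := fun x => max (r₀ - R) (min x (r₀ + R)) with hproj
  have hprojmem : ∀ x, proj x ∈ Set.Icc (r₀ - R) (r₀ + R) := fun x =>
    ⟨le_max_left _ _, max_le (by linarith) (min_le_right _ _)⟩
  have hprojeq : ∀ x ∈ Set.Icc (r₀ - R) (r₀ + R), proj x = x := fun x hx => by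
    rw [hproj]
    simp only
    rw [min_eq_left hx.2, max_eq_right hx.1]
  have hprojlip : LipschitzWith 1 proj := by
    apply LipschitzWith.of_dist_le_mul
    intro x y
    rw [NNReal.coe_one, one_mul, Real.dist_eq, Real.dist_eq, hproj]
    simp only
    rw [max_comm (r₀ - R) (min x (r₀ + R)), max_comm (r₀ - R) (min y (r₀ + R))]
    refine le_trans (abs_max_sub_max_le_abs _ _ _) ?_
    refine le_trans (abs_min_sub_min_le_max _ _ _ _) ?_
    simp
  set vtil : ℝ → ℝ → ℝ := fun t x => A (proj x) * (Real.cos t * Real.sin t ^ (m-1)) *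
    (Real.cos t ^ k - B (proj x) * Real.sin t ^ m)⁻¹ with hvtil
  obtain ⟨Creal, hCdef⟩ : ∃ x : ℝ, x = MA₀ * 2 + 1 := ⟨_, rfl⟩
  have hCpos : 0 < Creal := by rw [hCdef]; linarith
  obtain ⟨a, hadef⟩ : ∃ x : ℝ, x = min δD (min 1 (R / Creal)) := ⟨_, rfl⟩
  have hapos : 0 < a := by
    rw [hadef]
    exact lt_min hδD (lt_min one_pos (by positivity))
  have haδD : a ≤ δD := by rw [hadef]; exact min_le_left _ _
  have ha1 : a ≤ 1 := by rw [hadef]; exact le_trans (min_le_right _ _) (min_le_left _ _)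
  have haR : Creal * a ≤ R := by
    have h1 : a ≤ R / Creal := by rw [hadef]; exact le_trans (min_le_right _ _) (min_le_right _ _)
    calc Creal * a ≤ Creal * (R / Creal) := by
          exact mul_le_mul_of_nonneg_left h1 (le_of_lt hCpos)
    _ = R := by field_simp
  -- uniform bound on vtil
  have hvb : ∀ t : ℝ, |t| ≤ δD → ∀ x : ℝ, |vtil t x| ≤ Creal := by
    intro t ht x
    rw [hvtil]
    simp only
    rw [abs_mul, abs_mul]
    have h1 : |A (proj x)| ≤ MA₀ := by
      simpa [Real.norm_eq_abs] using hMA₀ (proj x) (hprojmem x)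
    have h2 : |Real.cos t * Real.sin t ^ (m-1)| ≤ 1 := by
      rw [abs_mul, abs_pow]
      exact mul_le_one₀ (Real.abs_cos_le_one t) (by positivity)
        (pow_le_one₀ (abs_nonneg _) (Real.abs_sin_le_one t))
    have h3 : (1:ℝ)/2 ≤ Real.cos t ^ k - B (proj x) * Real.sin t ^ m :=
      hD' (proj x) (hprojmem x) t ht
    have h4 : |(Real.cos t ^ k - B (proj x) * Real.sin t ^ m)⁻¹| ≤ 2 := by
      rw [abs_inv]
      rw [abs_of_pos (by linarith : (0:ℝ) < Real.cos t ^ k - B (proj x) * Real.sin t ^ m)]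
      rw [show (2:ℝ) = (1/2 : ℝ)⁻¹ by norm_num]
      exact inv_anti₀ (by norm_num) h3
    calc |A (proj x)| * |Real.cos t * Real.sin t ^ (m-1)| *
        |(Real.cos t ^ k - B (proj x) * Real.sin t ^ m)⁻¹|
        ≤ MA₀ * 1 * 2 := by
          apply mul_le_mul (mul_le_mul h1 h2 (abs_nonneg _) hMA₀nn) h4 (abs_nonneg _)
          positivity
    _ ≤ Creal := by rw [hCdef]; linarith
  have habs : ∀ t ∈ Set.Icc (0:ℝ) a, |t| ≤ δD := fun t ht => by
    rw [abs_of_nonneg ht.1]; exact le_trans ht.2 haδD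
  -- Picard–Lindelöf
  have hPL : IsPicardLindelof vtil (tmin := 0) (tmax := a) ⟨0, le_rfl, le_of_lt hapos⟩ r₀
      R.toNNReal 0 Creal.toNNReal K := by
    refine ⟨?_, ?_, ?_, ?_⟩
    · -- Lipschitz
      intro t ht
      rw [lipschitzOnWith_iff_dist_le_mul]
      intro x hx y hy
      have htI : t ∈ Set.Icc (-δD) δD := abs_le.1 (habs t ht)
      have h1 := (hKlip t htI).dist_le_mul (proj x) (hprojmem x) (proj y) (hprojmem y)
      have h2 : dist (proj x) (proj y) ≤ dist x y := by
        have := hprojlip.dist_le_mul x y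
        rwa [NNReal.coe_one, one_mul] at this
      calc dist (vtil t x) (vtil t y)
          ≤ (K:ℝ) * dist (proj x) (proj y) := h1
      _ ≤ (K:ℝ) * dist x y := mul_le_mul_of_nonneg_left h2 K.coe_nonneg
    · -- continuity in t
      intro x hx
      have hconst : Continuous (fun t : ℝ => A (proj x) * (Real.cos t * Real.sin t ^ (m-1))) :=
        continuous_const.mul (Real.continuous_cos.mul (Real.continuous_sin.pow _))
      have hden : Continuous (fun t : ℝ => Real.cos t ^ k - B (proj x) * Real.sin t ^ m) :=
        (Real.continuous_cos.pow k).sub (continuous_const.mul (Real.continuous_sin.pow m))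
      refine (hconst.continuousOn.mul (hden.continuousOn.inv₀ ?_))
      intro t ht
      have := hD' (proj x) (hprojmem x) t (habs t ht)
      intro hzero
      rw [hzero] at this
      norm_num at this
    · -- norm bound
      intro t ht x hx
      rw [Real.norm_eq_abs]
      exact (hvb t (habs t ht) x).trans (Real.le_coe_toNNReal _)
    · -- C * tdist ≤ R
      rw [Real.coe_toNNReal _ hCpos.le, Real.coe_toNNReal _ hRpos.le]
      simp only [NNReal.coe_zero, sub_zero, sub_self]
      rw [max_eq_left (le_of_lt hapos)]
      exact haR
  obtain ⟨f, hf0', hfd⟩ := hPL.exists_eq_forall_mem_Icc_hasDerivWithinAt₀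
  have hf0 : f 0 = r₀ := hf0'
  -- a priori bound keeps f inside the safety interval
  have hbd : ∀ t ∈ Set.Icc (0:ℝ) a, ‖f t - f 0‖ ≤ Creal * (t - 0) := by
    apply norm_image_sub_le_of_norm_deriv_le_segment' hfd
    intro t ht
    rw [Real.norm_eq_abs]
    exact hvb t (habs t (Set.Ico_subset_Icc_self ht)) (f t)
  have hmem : ∀ t ∈ Set.Icc (0:ℝ) a, f t ∈ Set.Icc (r₀ - R) (r₀ + R) := by
    intro t ht
    have h1 := hbd t ht
    rw [hf0, sub_zero, Real.norm_eq_abs, abs_le] at h1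
    have h2 : Creal * t ≤ R := le_trans
      (mul_le_mul_of_nonneg_left ht.2 (le_of_lt hCpos)) haR
    exact ⟨by linarith [h1.1], by linarith [h1.2]⟩
  have hval : ∀ t ∈ Set.Icc (0:ℝ) a, vtil t (f t) =
      A (f t) * (Real.cos t * Real.sin t ^ (m-1)) *
        (Real.cos t ^ k - B (f t) * Real.sin t ^ m)⁻¹ := by
    intro t ht
    rw [hvtil]
    simp only
    rw [hprojeq (f t) (hmem t ht)]
  have hfderiv : ∀ t ∈ Set.Ioo (0:ℝ) a, HasDerivAt f
      (A (f t) * (Real.cos t * Real.sin t ^ (m-1)) *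
        (Real.cos t ^ k - B (f t) * Real.sin t ^ m)⁻¹) t := by
    intro t ht
    have h1 := (hfd t (Set.Ioo_subset_Icc_self ht)).hasDerivAt
      (Icc_mem_nhds ht.1 ht.2)
    rwa [hval t (Set.Ioo_subset_Icc_self ht)] at h1
  have hπ : (1:ℝ) < π / 2 := by
    have := Real.pi_gt_three
    linarith
  have hfpos : ∀ t ∈ Set.Ioo (0:ℝ) a, 0 < A (f t) * (Real.cos t * Real.sin t ^ (m-1)) *
      (Real.cos t ^ k - B (f t) * Real.sin t ^ m)⁻¹ := by
    intro t ht
    have htmem := Set.Ioo_subset_Icc_self ht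
    have hA : 0 < A (f t) := hApos (f t) (hsub (hmem t htmem))
    have hcos : 0 < Real.cos t := Real.cos_pos_of_mem_Ioo
      ⟨by linarith [Real.pi_pos, ht.1], by linarith [ht.2, ha1]⟩
    have hsin : 0 < Real.sin t := Real.sin_pos_of_pos_of_lt_pi ht.1
      (by linarith [Real.pi_gt_three, ht.2, ha1])
    have hden : 0 < Real.cos t ^ k - B (f t) * Real.sin t ^ m := by
      have := hD' (f t) (hmem t htmem) t (habs t htmem)
      linarith
    have := pow_pos hsin (m-1)
    positivity
  have hstrict : StrictMonoOn f (Set.Icc 0 a) := by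
    apply strictMonoOn_of_deriv_pos (convex_Icc 0 a)
    · exact fun t ht => (hfd t ht).continuousWithinAt
    · rw [interior_Icc]
      intro t ht
      rw [(hfderiv t ht).deriv]
      exact hfpos t ht
  refine ⟨a, hapos, f, fun φ hφ => ⟨?_, hfderiv φ hφ⟩, ?_⟩
  · have := hstrict (Set.left_mem_Icc.2 (le_of_lt hapos)) (Set.Ioo_subset_Icc_self hφ) hφ.1
    rw [hf0] at this
    exact this
  · have hcw : ContinuousWithinAt f (Set.Icc 0 a) 0 :=
      (hfd 0 ⟨le_rfl, le_of_lt hapos⟩).continuousWithinAt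
    have h2 : Tendsto f (𝓝[Set.Ioo (0:ℝ) a] 0) (𝓝 r₀) := by
      rw [← hf0]
      exact hcw.tendsto.mono_left (nhdsWithin_mono _ Set.Ioo_subset_Icc_self)
    rwa [nhdsWithin_Ioo_eq_nhdsGT hapos] at h2

set_option maxHeartbeats 2000000 in
lemma aux_unique (m k : ℕ) (hm : 2 ≤ m) (hk : 1 ≤ k) (A B : ℝ → ℝ)
    (hAC1 : ContDiffOn ℝ 1 A (Set.Ioi 0)) (hBC1 : ContDiffOn ℝ 1 B (Set.Ioi 0))
    (hApos : ∀ r ∈ Set.Ioi (0:ℝ), 0 < A r) (hBpos : ∀ r ∈ Set.Ioi (0:ℝ), 0 < B r)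
    {r₀ : ℝ} (hr₀ : 0 < r₀) {ε₁ ε₂ : ℝ} (hε₁ : 0 < ε₁) (hε₂ : 0 < ε₂)
    {ρ₁ ρ₂ : ℝ → ℝ}
    (h₁ : ∀ t ∈ Set.Ioo (0:ℝ) ε₁, ρ₁ t ∈ Set.Ioi r₀ ∧
      HasDerivAt ρ₁ (A (ρ₁ t) * (Real.cos t * Real.sin t ^ (m-1)) *
        (Real.cos t ^ k - B (ρ₁ t) * Real.sin t ^ m)⁻¹) t)
    (hl₁ : Filter.Tendsto ρ₁ (𝓝[>] 0) (𝓝 r₀))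
    (h₂ : ∀ t ∈ Set.Ioo (0:ℝ) ε₂, ρ₂ t ∈ Set.Ioi r₀ ∧
      HasDerivAt ρ₂ (A (ρ₂ t) * (Real.cos t * Real.sin t ^ (m-1)) *
        (Real.cos t ^ k - B (ρ₂ t) * Real.sin t ^ m)⁻¹) t)
    (hl₂ : Filter.Tendsto ρ₂ (𝓝[>] 0) (𝓝 r₀)) :
    ∀ φ ∈ Set.Ioo (0:ℝ) (min ε₁ ε₂), ρ₁ φ = ρ₂ φ := by
  have hd₁ : ∀ t ∈ Set.Ioo (0:ℝ) ε₁, HasDerivAt ρ₁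
      (A (ρ₁ t) * (Real.cos t * Real.sin t ^ (m-1)) *
        (Real.cos t ^ k - B (ρ₁ t) * Real.sin t ^ m)⁻¹) t := fun t ht => (h₁ t ht).2
  have hd₂ : ∀ t ∈ Set.Ioo (0:ℝ) ε₂, HasDerivAt ρ₂
      (A (ρ₂ t) * (Real.cos t * Real.sin t ^ (m-1)) *
        (Real.cos t ^ k - B (ρ₂ t) * Real.sin t ^ m)⁻¹) t := fun t ht => (h₂ t ht).2
  have hmem₁ : ∀ t ∈ Set.Ioo (0:ℝ) ε₁, ρ₁ t ∈ Set.Ioi r₀ := fun t ht => (h₁ t ht).1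
  have hmem₂ : ∀ t ∈ Set.Ioo (0:ℝ) ε₂, ρ₂ t ∈ Set.Ioi r₀ := fun t ht => (h₂ t ht).1
  have hAcont := hAC1.continuousOn
  have hBcont := hBC1.continuousOn
  have he₁ := aux_e_ne_zero m k hm hk A B hAcont hBcont hApos hBpos hr₀ hmem₁ hd₁ hl₁
  set v : ℝ → ℝ → ℝ := fun t x => A x * (Real.cos t * Real.sin t ^ (m-1)) *
    (Real.cos t ^ k - B x * Real.sin t ^ m)⁻¹ with hv
  -- base-case data
  have hsub₁ : Set.Icc r₀ (r₀ + 1) ⊆ Set.Ioi (0:ℝ) := fun x hx => lt_of_lt_of_le hr₀ hx.1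
  obtain ⟨MA₁, hMA₁⟩ := (isCompact_Icc (a := r₀) (b := r₀ + 1)).exists_bound_of_continuousOn
    (hAcont.mono hsub₁)
  obtain ⟨MB₁, hMB₁⟩ := (isCompact_Icc (a := r₀) (b := r₀ + 1)).exists_bound_of_continuousOn
    (hBcont.mono hsub₁)
  have hMA₁nn : 0 ≤ MA₁ := le_trans (norm_nonneg _) (hMA₁ r₀ ⟨le_rfl, by linarith⟩)
  obtain ⟨δD₁, hδD₁, hDD₁⟩ := aux_denom_near_zero m k (by omega) MB₁
  obtain ⟨KA₁, hKA₁⟩ := aux_lipschitz_of_contDiffOn hAC1 hr₀ (b := r₀ + 1)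
  obtain ⟨KB₁, hKB₁⟩ := aux_lipschitz_of_contDiffOn hBC1 hr₀ (b := r₀ + 1)
  obtain ⟨K₁, hK₁⟩ := aux_unif_lip m k A B (I := Set.Icc (-δD₁) δD₁) hKA₁ hKB₁
    (fun r hr => by simpa [Real.norm_eq_abs] using hMA₁ r hr) hMA₁nn
    (by norm_num : (0:ℝ) < 1/2)
    (fun r hr t ht => le_trans
      (hDD₁ (B r) t (by simpa [Real.norm_eq_abs] using hMB₁ r hr) (abs_le.2 ht))
      (le_abs_self _))
  obtain ⟨δm₁', hδm₁'pos, hδm₁'⟩ := mem_nhdsGT_iff_exists_Ioc_subset.1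
    (hl₁.eventually_lt_const (by linarith : r₀ < r₀ + 1))
  obtain ⟨δm₂', hδm₂'pos, hδm₂'⟩ := mem_nhdsGT_iff_exists_Ioc_subset.1
    (hl₂.eventually_lt_const (by linarith : r₀ < r₀ + 1))
  rw [Set.mem_Ioi] at hδm₁'pos hδm₂'pos
  obtain ⟨δb, hδbdef⟩ : ∃ x : ℝ, x = min (min δD₁ (min δm₁' δm₂')) (min ε₁ ε₂ / 2) := ⟨_, rfl⟩
  have hδbpos : 0 < δb := by
    rw [hδbdef]
    refine lt_min (lt_min hδD₁ (lt_min hδm₁'pos hδm₂'pos)) ?_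
    have := lt_min hε₁ hε₂
    positivity
  have hδbD : δb ≤ δD₁ := by rw [hδbdef]; exact le_trans (min_le_left _ _) (min_le_left _ _)
  have hδbm₁ : δb ≤ δm₁' := by
    rw [hδbdef]
    exact le_trans (min_le_left _ _) (le_trans (min_le_right _ _) (min_le_left _ _))
  have hδbm₂ : δb ≤ δm₂' := by
    rw [hδbdef]
    exact le_trans (min_le_left _ _) (le_trans (min_le_right _ _) (min_le_right _ _))
  have hδbμ : δb < min ε₁ ε₂ := by
    rw [hδbdef]
    have h0 : 0 < min ε₁ ε₂ := lt_min hε₁ hε₂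
    exact lt_of_le_of_lt (min_le_right _ _) (by linarith)
  have hδbε₁ : δb < ε₁ := lt_of_lt_of_le hδbμ (min_le_left _ _)
  have hδbε₂ : δb < ε₂ := lt_of_lt_of_le hδbμ (min_le_right _ _)
  -- the base case: agreement on (0, δb]
  have base : ∀ t ∈ Set.Ioc (0:ℝ) δb, ρ₁ t = ρ₂ t := by
    intro tstar htstar
    have hsfun : ∀ t : ℝ, LipschitzOnWith K₁ (v t)
        (if t ∈ Set.Icc (0:ℝ) δb then Set.Icc r₀ (r₀ + 1) else (∅ : Set ℝ)) := by
      intro t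
      by_cases h : t ∈ Set.Icc (0:ℝ) δb
      · rw [if_pos h]
        exact hK₁ t (abs_le.1 (by rw [abs_of_nonneg h.1]; linarith [h.2]))
      · rw [if_neg h]
        exact lipschitzOnWith_empty _ _
    have hest : ∀ θ ∈ Set.Ioo (0:ℝ) tstar,
        dist (ρ₁ tstar) (ρ₂ tstar) ≤ dist (ρ₁ θ) (ρ₂ θ) * exp ((K₁:ℝ) * (tstar - θ)) := by
      intro θ hθ
      have hIccsub : Set.Icc θ tstar ⊆ Set.Ioo (0:ℝ) ε₁ := fun x hx =>
        ⟨lt_of_lt_of_le hθ.1 hx.1, lt_of_le_of_lt hx.2 (lt_of_le_of_lt htstar.2 hδbε₁)⟩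
      have hIccsub₂ : Set.Icc θ tstar ⊆ Set.Ioo (0:ℝ) ε₂ := fun x hx =>
        ⟨lt_of_lt_of_le hθ.1 hx.1, lt_of_le_of_lt hx.2 (lt_of_le_of_lt htstar.2 hδbε₂)⟩
      refine dist_le_of_trajectories_ODE_of_mem (fun t _ => hsfun t)
        (fun x hx => ((hd₁ x (hIccsub hx)).continuousAt).continuousWithinAt)
        (fun x hx => ((hd₁ x (hIccsub (Set.Ico_subset_Icc_self hx))).hasDerivWithinAt))
        (fun x hx => ?_)
        (fun x hx => ((hd₂ x (hIccsub₂ hx)).continuousAt).continuousWithinAt)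
        (fun x hx => ((hd₂ x (hIccsub₂ (Set.Ico_subset_Icc_self hx))).hasDerivWithinAt))
        (fun x hx => ?_)
        le_rfl tstar ⟨le_of_lt hθ.2, le_rfl⟩
      · have hx' : x ∈ Set.Icc (0:ℝ) δb :=
          ⟨le_of_lt (lt_of_lt_of_le hθ.1 hx.1), le_of_lt (lt_of_lt_of_le hx.2 htstar.2)⟩
        rw [if_pos hx']
        refine ⟨le_of_lt (hmem₁ x (hIccsub (Set.Ico_subset_Icc_self hx))), ?_⟩
        have := hδm₁' ⟨lt_of_lt_of_le hθ.1 hx.1,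
          le_trans (le_of_lt (lt_of_lt_of_le hx.2 htstar.2)) hδbm₁⟩
        exact le_of_lt this
      · have hx' : x ∈ Set.Icc (0:ℝ) δb :=
          ⟨le_of_lt (lt_of_lt_of_le hθ.1 hx.1), le_of_lt (lt_of_lt_of_le hx.2 htstar.2)⟩
        rw [if_pos hx']
        refine ⟨le_of_lt (hmem₂ x (hIccsub₂ (Set.Ico_subset_Icc_self hx))), ?_⟩
        have := hδm₂' ⟨lt_of_lt_of_le hθ.1 hx.1,
          le_trans (le_of_lt (lt_of_lt_of_le hx.2 htstar.2)) hδbm₂⟩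
        exact le_of_lt this
    have htend : Tendsto (fun θ => dist (ρ₁ θ) (ρ₂ θ) * exp ((K₁:ℝ) * (tstar - θ)))
        (𝓝[>] (0:ℝ)) (𝓝 0) := by
      have h1 : Tendsto (fun θ => dist (ρ₁ θ) (ρ₂ θ)) (𝓝[>] (0:ℝ)) (𝓝 0) := by
        have := hl₁.dist hl₂
        rwa [dist_self] at this
      have h2 : Tendsto (fun θ : ℝ => exp ((K₁:ℝ) * (tstar - θ))) (𝓝[>] (0:ℝ))
          (𝓝 (exp ((K₁:ℝ) * (tstar - 0)))) := by
        exact ((Real.continuous_exp.comp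
          (continuous_const.mul (continuous_const.sub continuous_id))).tendsto 0).mono_left
          nhdsWithin_le_nhds
      have := h1.mul h2
      rwa [zero_mul] at this
    have hle : dist (ρ₁ tstar) (ρ₂ tstar) ≤ 0 := by
      refine ge_of_tendsto htend ?_
      filter_upwards [Ioo_mem_nhdsGT_of_mem (Set.mem_Ico.2 ⟨le_rfl, htstar.1⟩)] with θ hθ
      exact hest θ hθ
    exact dist_le_zero.1 hle
  -- main sSup argument
  intro φ hφ
  rcases le_or_gt φ δb with hφδ | hφδ
  · exact base φ ⟨hφ.1, hφδ⟩
  have hφε₁ : φ < ε₁ := lt_of_lt_of_le hφ.2 (min_le_left _ _)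
  have hφε₂ : φ < ε₂ := lt_of_lt_of_le hφ.2 (min_le_right _ _)
  set P : Set ℝ := {t : ℝ | t ∈ Set.Icc δb φ ∧ ∀ s ∈ Set.Icc δb t, ρ₁ s = ρ₂ s} with hP
  have hPb : δb ∈ P := by
    refine ⟨⟨le_rfl, le_of_lt hφδ⟩, fun s hs => ?_⟩
    have : s = δb := le_antisymm hs.2 hs.1
    rw [this]
    exact base δb ⟨hδbpos, le_rfl⟩
  have hPbdd : BddAbove P := ⟨φ, fun t ht => ht.1.2⟩
  obtain ⟨T, hTdef⟩ : ∃ x : ℝ, x = sSup P := ⟨_, rfl⟩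
  have hTlb : δb ≤ T := by rw [hTdef]; exact le_csSup hPbdd hPb
  have hTub : T ≤ φ := by rw [hTdef]; exact csSup_le ⟨δb, hPb⟩ (fun t ht => ht.1.2)
  have hTmem₁ : T ∈ Set.Ioo (0:ℝ) ε₁ :=
    ⟨lt_of_lt_of_le hδbpos hTlb, lt_of_le_of_lt hTub hφε₁⟩
  have hTmem₂ : T ∈ Set.Ioo (0:ℝ) ε₂ :=
    ⟨lt_of_lt_of_le hδbpos hTlb, lt_of_le_of_lt hTub hφε₂⟩
  have hagree : ∀ s ∈ Set.Ico δb T, ρ₁ s = ρ₂ s := by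
    intro s hs
    obtain ⟨t, htP, hst⟩ := exists_lt_of_lt_csSup ⟨δb, hPb⟩ (by rw [← hTdef]; exact hs.2)
    exact htP.2 s ⟨hs.1, le_of_lt hst⟩
  have hc₁ : ContinuousAt ρ₁ T := (hd₁ T hTmem₁).continuousAt
  have hc₂ : ContinuousAt ρ₂ T := (hd₂ T hTmem₂).continuousAt
  have hTeq : ρ₁ T = ρ₂ T := by
    rcases eq_or_lt_of_le hTlb with h | h
    · rw [← h]
      exact base δb ⟨hδbpos, le_rfl⟩
    · have hev : ρ₁ =ᶠ[𝓝[<] T] ρ₂ := by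
        filter_upwards [Ioo_mem_nhdsLT_of_mem (Set.mem_Ioc.2 ⟨h, le_rfl⟩)] with s hs
        exact hagree s ⟨le_of_lt hs.1, hs.2⟩
      exact tendsto_nhds_unique
        ((hc₂.tendsto.mono_left nhdsWithin_le_nhds).congr' hev.symm)
        (hc₁.tendsto.mono_left nhdsWithin_le_nhds) |>.symm
  have hTP : T ∈ P := by
    refine ⟨⟨hTlb, hTub⟩, fun s hs => ?_⟩
    rcases lt_or_eq_of_le hs.2 with h | h
    · exact hagree s ⟨hs.1, h⟩
    · rw [h]; exact hTeq
  by_cases hTφ : T = φ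
  · rw [← hTφ]
    exact hTeq
  exfalso
  have hTlt : T < φ := lt_of_le_of_ne hTub hTφ
  -- local uniqueness at T
  have hρ₁T : r₀ < ρ₁ T := hmem₁ T hTmem₁
  have hρ₁Tpos : 0 < ρ₁ T := lt_trans hr₀ hρ₁T
  have heT : Real.cos T ^ k - B (ρ₁ T) * Real.sin T ^ m ≠ 0 := he₁ T hTmem₁
  obtain ⟨η, hηdef⟩ : ∃ x : ℝ, x = |Real.cos T ^ k - B (ρ₁ T) * Real.sin T ^ m| / 2 := ⟨_, rfl⟩
  have hηpos : 0 < η := by rw [hηdef]; exact half_pos (abs_pos.2 heT)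
  have hDcont : ContinuousAt (fun z : ℝ × ℝ => Real.cos z.2 ^ k - B z.1 * Real.sin z.2 ^ m)
      (ρ₁ T, T) := by
    refine ContinuousAt.sub ?_ (ContinuousAt.mul ?_ ?_)
    · exact ((Real.continuous_cos.comp continuous_snd).pow k).continuousAt
    · exact ContinuousAt.comp (x := ((ρ₁ T, T) : ℝ × ℝ))
        (hBcont.continuousAt (isOpen_Ioi.mem_nhds hρ₁Tpos)) continuousAt_fst
    · exact ((Real.continuous_sin.comp continuous_snd).pow m).continuousAt
  have hDabs : Tendsto (fun z : ℝ × ℝ => |Real.cos z.2 ^ k - B z.1 * Real.sin z.2 ^ m|)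
      (𝓝 (ρ₁ T, T)) (𝓝 (|Real.cos T ^ k - B (ρ₁ T) * Real.sin T ^ m|)) := hDcont.abs
  have hevD : ∀ᶠ z : ℝ × ℝ in 𝓝 (ρ₁ T, T),
      η < |Real.cos z.2 ^ k - B z.1 * Real.sin z.2 ^ m| := by
    apply hDabs.eventually_const_lt
    rw [hηdef]
    have := abs_pos.2 heT
    linarith
  rw [nhds_prod_eq] at hevD
  obtain ⟨pa, hpa, pb, hpb, himp⟩ := Filter.eventually_prod_iff.1 hevD
  obtain ⟨δa, hδapos, hδa⟩ := Metric.eventually_nhds_iff.1 hpa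
  obtain ⟨δbb, hδbbpos, hδbb⟩ := Metric.eventually_nhds_iff.1 hpb
  obtain ⟨δ', hδ'def⟩ : ∃ x : ℝ, x = min (min (δa/2) (δbb/2)) (ρ₁ T / 2) := ⟨_, rfl⟩
  have hδ'pos : 0 < δ' := by
    rw [hδ'def]; exact lt_min (lt_min (by linarith) (by linarith)) (by linarith)
  have hδ'a : δ' < δa := by
    rw [hδ'def]
    exact lt_of_le_of_lt (le_trans (min_le_left _ _) (min_le_left _ _)) (by linarith)
  have hδ'b : δ' < δbb := by
    rw [hδ'def]
    exact lt_of_le_of_lt (le_trans (min_le_left _ _) (min_le_right _ _)) (by linarith)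
  have hδ'ρ : δ' ≤ ρ₁ T / 2 := by rw [hδ'def]; exact min_le_right _ _
  have hball : ∀ r t : ℝ, |r - ρ₁ T| ≤ δ' → |t - T| ≤ δ' →
      η ≤ |Real.cos t ^ k - B r * Real.sin t ^ m| := by
    intro r t hr ht
    have h1 : pa r := hδa (by rw [Real.dist_eq]; linarith [hr])
    have h2 : pb t := hδbb (by rw [Real.dist_eq]; linarith [ht])
    exact le_of_lt (himp h1 h2)
  have hballpos : (0:ℝ) < ρ₁ T - δ' := by linarith
  obtain ⟨KA₂, hKA₂⟩ := aux_lipschitz_of_contDiffOn hAC1 hballpos (b := ρ₁ T + δ')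
  obtain ⟨KB₂, hKB₂⟩ := aux_lipschitz_of_contDiffOn hBC1 hballpos (b := ρ₁ T + δ')
  have hballsub : Set.Icc (ρ₁ T - δ') (ρ₁ T + δ') ⊆ Set.Ioi (0:ℝ) := fun x hx =>
    lt_of_lt_of_le hballpos hx.1
  obtain ⟨MA₂, hMA₂⟩ := (isCompact_Icc (a := ρ₁ T - δ') (b := ρ₁ T + δ')).exists_bound_of_continuousOn
    (hAcont.mono hballsub)
  have hMA₂nn : 0 ≤ MA₂ := le_trans (norm_nonneg _)
    (hMA₂ (ρ₁ T) ⟨by linarith, by linarith⟩)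
  obtain ⟨K₂, hK₂⟩ := aux_unif_lip m k A B (I := Set.Icc (T - δ') (T + δ')) hKA₂ hKB₂
    (fun r hr => by simpa [Real.norm_eq_abs] using hMA₂ r hr) hMA₂nn hηpos
    (fun r hr t ht => hball r t (abs_le.2 ⟨by linarith [hr.1], by linarith [hr.2]⟩)
      (abs_le.2 ⟨by linarith [ht.1], by linarith [ht.2]⟩))
  obtain ⟨γ₁, hγ₁pos, hγ₁⟩ := Metric.continuousAt_iff.1 hc₁ δ' hδ'pos
  obtain ⟨γ₂, hγ₂pos, hγ₂⟩ := Metric.continuousAt_iff.1 hc₂ δ' hδ'pos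
  obtain ⟨δ'', hδ''def⟩ : ∃ x : ℝ, x = min (min (γ₁/2) (γ₂/2)) (min (δ'/2) ((φ - T)/2)) :=
    ⟨_, rfl⟩
  have hδ''pos : 0 < δ'' := by
    rw [hδ''def]
    exact lt_min (lt_min (by linarith) (by linarith)) (lt_min (by linarith) (by linarith))
  have hδ''γ₁ : δ'' < γ₁ := by
    rw [hδ''def]
    exact lt_of_le_of_lt (le_trans (min_le_left _ _) (min_le_left _ _)) (by linarith)
  have hδ''γ₂ : δ'' < γ₂ := by
    rw [hδ''def]
    exact lt_of_le_of_lt (le_trans (min_le_left _ _) (min_le_right _ _)) (by linarith)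
  have hδ''δ' : δ'' ≤ δ' := by
    rw [hδ''def]
    exact le_trans (min_le_right _ _) (le_trans (min_le_left _ _) (by linarith))
  have hδ''φ : T + δ'' < φ := by
    have : δ'' ≤ (φ - T)/2 := by
      rw [hδ''def]; exact le_trans (min_le_right _ _) (min_le_right _ _)
    linarith
  have hsfun₂ : ∀ t : ℝ, LipschitzOnWith K₂ (v t)
      (if t ∈ Set.Icc T (T + δ'') then Set.Icc (ρ₁ T - δ') (ρ₁ T + δ') else (∅ : Set ℝ)) := by
    intro t
    by_cases h : t ∈ Set.Icc T (T + δ'')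
    · rw [if_pos h]
      exact hK₂ t ⟨by linarith [h.1], by linarith [h.2]⟩
    · rw [if_neg h]
      exact lipschitzOnWith_empty _ _
  have hIccsub : Set.Icc T (T + δ'') ⊆ Set.Ioo (0:ℝ) ε₁ := fun x hx =>
    ⟨lt_of_lt_of_le hTmem₁.1 hx.1, by
      have := hx.2; have h2 := hδ''φ; have := hφε₁; linarith⟩
  have hIccsub₂ : Set.Icc T (T + δ'') ⊆ Set.Ioo (0:ℝ) ε₂ := fun x hx =>
    ⟨lt_of_lt_of_le hTmem₁.1 hx.1, by
      have := hx.2; have h2 := hδ''φ; have := hφε₂; linarith⟩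
  have hEq : Set.EqOn ρ₁ ρ₂ (Set.Icc T (T + δ'')) := by
    refine ODE_solution_unique_of_mem_Icc_right (fun t _ => hsfun₂ t)
      (fun x hx => ((hd₁ x (hIccsub hx)).continuousAt).continuousWithinAt)
      (fun x hx => ((hd₁ x (hIccsub (Set.Ico_subset_Icc_self hx))).hasDerivWithinAt))
      (fun x hx => ?_)
      (fun x hx => ((hd₂ x (hIccsub₂ hx)).continuousAt).continuousWithinAt)
      (fun x hx => ((hd₂ x (hIccsub₂ (Set.Ico_subset_Icc_self hx))).hasDerivWithinAt))
      (fun x hx => ?_)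
      hTeq
    · rw [if_pos (Set.Ico_subset_Icc_self hx)]
      have hdist : dist x T < γ₁ := by
        rw [Real.dist_eq, abs_of_nonneg (by linarith [hx.1] : (0:ℝ) ≤ x - T)]
        have := hx.2
        linarith
      have := hγ₁ hdist
      rw [Real.dist_eq, abs_lt] at this
      exact ⟨by linarith [this.1, hδ''δ'], by linarith [this.2, hδ''δ']⟩
    · rw [if_pos (Set.Ico_subset_Icc_self hx)]
      have hdist : dist x T < γ₂ := by
        rw [Real.dist_eq, abs_of_nonneg (by linarith [hx.1] : (0:ℝ) ≤ x - T)]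
        have := hx.2
        linarith
      have := hγ₂ hdist
      rw [Real.dist_eq, abs_lt] at this
      rw [← hTeq] at this
      exact ⟨by linarith [this.1, hδ''δ'], by linarith [this.2, hδ''δ']⟩
  have ht'P : T + δ'' ∈ P := by
    refine ⟨⟨by linarith, le_of_lt hδ''φ⟩, fun s hs => ?_⟩
    rcases le_or_gt s T with h | h
    · exact hTP.2 s ⟨hs.1, h⟩
    · exact hEq ⟨le_of_lt h, hs.2⟩
  have := le_csSup hPbdd ht'P
  rw [← hTdef] at this
  linarith

set_option maxHeartbeats 1000000 in
/-- For every `r₀ > 0` there exists a solution `ρ(φ)` of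
`dρ/dφ = F(ρ, φ)` on some interval `(0, ε)` with values in `(r₀, ∞)` and
`ρ(φ) → r₀` as `φ → 0⁺`; and any two such solutions agree on the common domain. -/
theorem stmt8 (n m : ℕ) (hn : 3 ≤ n) (hm : 2 ≤ m) (hmn : m ≤ n)
    (α c : ℝ) (hα : α = 1 ∨ α = 1 / m) (hc : 0 < c)
    (ξ χ ξ' χ' : ℝ → ℝ)
    (hξd : ∀ r ∈ Set.Ioi (0 : ℝ), HasDerivAt ξ (ξ' r) r)
    (hχd : ∀ r ∈ Set.Ioi (0 : ℝ), HasDerivAt χ (χ' r) r)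
    (hξC2 : ContDiffOn ℝ 1 ξ' (Set.Ioi 0)) (hχC2 : ContDiffOn ℝ 1 χ' (Set.Ioi 0))
    (hξpos : ∀ r ∈ Set.Ioi (0 : ℝ), 0 < ξ r)
    (hξ'pos : ∀ r ∈ Set.Ioi (0 : ℝ), 0 < ξ' r)
    (hχpos : ∀ r ∈ Set.Ioi (0 : ℝ), 0 < χ r)
    (hχmono : MonotoneOn χ (Set.Ioi 0))
    (hq1pos : ∀ r ∈ Set.Ioi (0 : ℝ), 0 < ξ' r / ξ r)
    (hq1 : AntitoneOn (fun r => ξ' r / ξ r) (Set.Ioi 0))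
    (hq2 : AntitoneOn (fun r => ξ' r * χ' r / (ξ r * χ r)) (Set.Ioi 0))
    (hSpos : ∀ r ∈ Set.Ioi (0 : ℝ), 0 < cylSm n m ξ ξ' χ χ' r) :
    ∀ r₀ : ℝ, 0 < r₀ →
      (∃ ε > (0 : ℝ), ∃ ρ : ℝ → ℝ,
        (∀ φ ∈ Set.Ioo (0 : ℝ) ε, ρ φ ∈ Set.Ioi r₀ ∧
          HasDerivAt ρ (solitonF n m α c ξ ξ' χ χ' (ρ φ) φ) φ) ∧
        Tendsto ρ (𝓝[>] (0 : ℝ)) (𝓝 r₀)) ∧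
      (∀ ε₁ ε₂ : ℝ, 0 < ε₁ → 0 < ε₂ → ∀ ρ₁ ρ₂ : ℝ → ℝ,
        (∀ φ ∈ Set.Ioo (0 : ℝ) ε₁, ρ₁ φ ∈ Set.Ioi r₀ ∧
          HasDerivAt ρ₁ (solitonF n m α c ξ ξ' χ χ' (ρ₁ φ) φ) φ) →
        Tendsto ρ₁ (𝓝[>] (0 : ℝ)) (𝓝 r₀) →
        (∀ φ ∈ Set.Ioo (0 : ℝ) ε₂, ρ₂ φ ∈ Set.Ioi r₀ ∧
          HasDerivAt ρ₂ (solitonF n m α c ξ ξ' χ χ' (ρ₂ φ) φ) φ) →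
        Tendsto ρ₂ (𝓝[>] (0 : ℝ)) (𝓝 r₀) →
        ∀ φ ∈ Set.Ioo (0 : ℝ) (min ε₁ ε₂), ρ₁ φ = ρ₂ φ) := by
  intro r₀ hr₀
  obtain ⟨k, hk1, hXeq⟩ : ∃ k : ℕ, 1 ≤ k ∧ ∀ x : ℝ, x ^ (1/α : ℝ) = x ^ k := by
    rcases hα with h | h
    · exact ⟨1, le_rfl, fun x => by rw [h, div_one, Real.rpow_one, pow_one]⟩
    · refine ⟨m, by omega, fun x => ?_⟩
      rw [h, one_div_one_div, Real.rpow_natCast]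
  have key : ∀ r t : ℝ, solitonF n m α c ξ ξ' χ χ' r t
      = auxA n m α c ξ ξ' χ r * (Real.cos t * Real.sin t ^ (m-1)) *
        (Real.cos t ^ k - auxB n m α c ξ ξ' χ χ' r * Real.sin t ^ m)⁻¹ := by
    intro r t
    show auxA n m α c ξ ξ' χ r * (Real.cos t / Real.sin t) *
        (Real.cos t ^ (1/α : ℝ) / Real.sin t ^ m - auxB n m α c ξ ξ' χ χ' r)⁻¹ = _
    rw [hXeq (Real.cos t)]
    exact aux_alg hm _ _ _ _ _
  -- regularity of ξ and χ
  have hopen := isOpen_Ioi (a := (0:ℝ))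
  have hξC1 : ContDiffOn ℝ 1 ξ (Set.Ioi 0) := by
    rw [show (1 : WithTop ℕ∞) = 0 + 1 by norm_num, contDiffOn_succ_iff_deriv_of_isOpen hopen]
    refine ⟨fun r hr => (hξd r hr).differentiableAt.differentiableWithinAt, ?_, ?_⟩
    · intro h; exact absurd h (by norm_num)
    · rw [contDiffOn_zero]
      exact hξC2.continuousOn.congr (fun r hr => (hξd r hr).deriv)
  have hχC1 : ContDiffOn ℝ 1 χ (Set.Ioi 0) := by
    rw [show (1 : WithTop ℕ∞) = 0 + 1 by norm_num, contDiffOn_succ_iff_deriv_of_isOpen hopen]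
    refine ⟨fun r hr => (hχd r hr).differentiableAt.differentiableWithinAt, ?_, ?_⟩
    · intro h; exact absurd h (by norm_num)
    · rw [contDiffOn_zero]
      exact hχC2.continuousOn.congr (fun r hr => (hχd r hr).deriv)
  have hqC1 : ContDiffOn ℝ 1 (fun r => ξ' r / ξ r) (Set.Ioi 0) :=
    hξC2.div hξC1 (fun r hr => ne_of_gt (hξpos r hr))
  have hq2C1 : ContDiffOn ℝ 1 (fun r => χ' r / χ r) (Set.Ioi 0) :=
    hχC2.div hχC1 (fun r hr => ne_of_gt (hχpos r hr))
  have hcχ : ContDiffOn ℝ 1 (fun r => c * χ r) (Set.Ioi 0) := contDiffOn_const.mul hχC1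
  have hcχpos : ∀ r ∈ Set.Ioi (0:ℝ), 0 < c * χ r := fun r hr => mul_pos hc (hχpos r hr)
  have hrpow : ∀ y : ℝ, ContDiffOn ℝ 1 (fun r => (c * χ r) ^ (y : ℝ)) (Set.Ioi 0) := by
    intro y r hr
    exact ((Real.contDiffAt_rpow_const_of_ne (ne_of_gt (hcχpos r hr))).comp r
      ((hcχ r hr).contDiffAt (hopen.mem_nhds hr))).contDiffWithinAt
  have hAC1 : ContDiffOn ℝ 1 (auxA n m α c ξ ξ' χ) (Set.Ioi 0) := by
    have : ContDiffOn ℝ 1 (fun r => ((n - 1).choose (m - 1) : ℝ) * (ξ' r / ξ r) ^ (m - 1) *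
        (c * χ r) ^ (-(1 / α) : ℝ)) (Set.Ioi 0) :=
      (contDiffOn_const.mul (hqC1.pow _)).mul (hrpow _)
    exact this
  have hcylC1 : ContDiffOn ℝ 1 (cylSm n m ξ ξ' χ χ') (Set.Ioi 0) := by
    have : ContDiffOn ℝ 1 (fun r => (((n - 1).choose (m - 1) : ℝ) * (χ' r / χ r) +
        ((n - 1).choose m : ℝ) * (ξ' r / ξ r)) * (ξ' r / ξ r) ^ (m - 1)) (Set.Ioi 0) :=
      ((contDiffOn_const.mul hq2C1).add (contDiffOn_const.mul hqC1)).mul (hqC1.pow _)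
    exact this
  have hBC1 : ContDiffOn ℝ 1 (auxB n m α c ξ ξ' χ χ') (Set.Ioi 0) := by
    have : ContDiffOn ℝ 1 (fun r => cylSm n m ξ ξ' χ χ' r / (c * χ r) ^ (1/α : ℝ))
        (Set.Ioi 0) :=
      hcylC1.div (hrpow _) (fun r hr => ne_of_gt (Real.rpow_pos_of_pos (hcχpos r hr) _))
    exact this
  have hApos : ∀ r ∈ Set.Ioi (0:ℝ), 0 < auxA n m α c ξ ξ' χ r := by
    intro r hr
    have h1 : (0:ℝ) < ((n - 1).choose (m - 1) : ℝ) := by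
      exact_mod_cast Nat.choose_pos (by omega : m - 1 ≤ n - 1)
    have h2 : (0:ℝ) < (ξ' r / ξ r) ^ (m - 1) := pow_pos (hq1pos r hr) _
    have h3 : (0:ℝ) < (c * χ r) ^ (-(1 / α) : ℝ) := Real.rpow_pos_of_pos (hcχpos r hr) _
    exact mul_pos (mul_pos h1 h2) h3
  have hBpos : ∀ r ∈ Set.Ioi (0:ℝ), 0 < auxB n m α c ξ ξ' χ χ' r := fun r hr =>
    div_pos (hSpos r hr) (Real.rpow_pos_of_pos (hcχpos r hr) _)
  constructor
  · obtain ⟨ε, hε, ρ, hρ, hρlim⟩ := aux_exists m k hm hk1 _ _ hAC1 hBC1 hApos hr₀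
    refine ⟨ε, hε, ρ, fun φ hφ => ⟨(hρ φ hφ).1, ?_⟩, hρlim⟩
    rw [key]
    exact (hρ φ hφ).2
  · intro ε₁ ε₂ hε₁ hε₂ ρ₁ ρ₂ h₁ hl₁ h₂ hl₂
    exact aux_unique m k hm hk1 _ _ hAC1 hBC1 hApos hBpos hr₀ hε₁ hε₂
      (fun t ht => ⟨(h₁ t ht).1, by rw [← key]; exact (h₁ t ht).2⟩) hl₁
      (fun t ht => ⟨(h₂ t ht).1, by rw [← key]; exact (h₂ t ht).2⟩) hl₂
end

section
/- Let n ≥ 3 and 2 ≤ m < n be integers, α = 1 or α = 1/m, c > 0, and ε₀ > 0. Let ξ, χ : (0, ε₀] → ℝ be continuously differentiable with ξ, ξ', χ > 0 and χ' ≥ 0, with χ bounded on (0, ε₀], with lim_{r→0⁺} ξ(r) = 0, and with ∫₀^{ε₀} (ξ(ρ)/ξ'(ρ))^{m−1} χ(ρ)^{1/α} dρ < ∞. Then there is no differentiable function φ : (0, ε₀] → (0, π/2) satisfying the soliton angle ODE φ'(r) = C(n−1, m−1)^{−1} (ξ(r)/ξ'(r))^{m−1} tan φ(r) · [ (c χ(r))^{1/α}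 cos^{1/α} φ(r) / sin^m φ(r) − S_m(r) ] on (0, ε₀] and such that lim_{r→0⁺} φ(r) exists and belongs to (0, π/2]. -/
set_option maxHeartbeats 1000000

open Real Set Filter Topology Asymptotics MeasureTheory

/-- For `m < n`, no solution of the soliton angle ODE on `(0, ε₀]`
with values in `(0, π/2)` can have a limit in `(0, π/2]` as `r → 0⁺`. -/
theorem stmt9 (n m : ℕ) (hn : 3 ≤ n) (hm : 2 ≤ m) (hmn : m < n)
    (α c ε₀ : ℝ) (hα : α = 1 ∨ α = 1 / m) (hc : 0 < c) (hε₀ : 0 < ε₀)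
    (ξ χ ξ' χ' : ℝ → ℝ)
    (hξd : ∀ r ∈ Set.Ioc (0 : ℝ) ε₀, HasDerivAt ξ (ξ' r) r)
    (hχd : ∀ r ∈ Set.Ioc (0 : ℝ) ε₀, HasDerivAt χ (χ' r) r)
    (hξ'c : ContinuousOn ξ' (Set.Ioc 0 ε₀)) (hχ'c : ContinuousOn χ' (Set.Ioc 0 ε₀))
    (hξpos : ∀ r ∈ Set.Ioc (0 : ℝ) ε₀, 0 < ξ r)
    (hξ'pos : ∀ r ∈ Set.Ioc (0 : ℝ) ε₀, 0 < ξ' r)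
    (hχpos : ∀ r ∈ Set.Ioc (0 : ℝ) ε₀, 0 < χ r)
    (hχ'nonneg : ∀ r ∈ Set.Ioc (0 : ℝ) ε₀, 0 ≤ χ' r)
    (hχbdd : ∃ M : ℝ, ∀ r ∈ Set.Ioc (0 : ℝ) ε₀, χ r ≤ M)
    (hξ0 : Tendsto ξ (𝓝[>] (0 : ℝ)) (𝓝 0))
    (hint : IntegrableOn (fun ρ => (ξ ρ / ξ' ρ) ^ (m - 1) * χ ρ ^ (1 / α))
      (Set.Ioc 0 ε₀)) :
    ¬ ∃ φ : ℝ → ℝ,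
      (∀ r ∈ Set.Ioc (0 : ℝ) ε₀, φ r ∈ Set.Ioo 0 (π / 2)) ∧
      (∀ r ∈ Set.Ioc (0 : ℝ) ε₀,
        HasDerivAt φ
          ((((n - 1).choose (m - 1) : ℝ))⁻¹ * (ξ r / ξ' r) ^ (m - 1) * Real.tan (φ r) *
            ((c * χ r) ^ (1 / α) * Real.cos (φ r) ^ (1 / α) / Real.sin (φ r) ^ m -
              cylSm n m ξ ξ' χ χ' r)) r) ∧
      (∃ L ∈ Set.Ioc (0 : ℝ) (π / 2), Tendsto φ (𝓝[>] (0 : ℝ)) (𝓝 L)) := by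
  rintro ⟨φ, hφmem, hφode, L, hL, hφlim⟩
  have hb : (0:ℝ) < ((n-1).choose (m-1) : ℝ) := by
    exact_mod_cast Nat.choose_pos (by omega)
  have hb2 : (0:ℝ) < ((n-1).choose m : ℝ) := by
    exact_mod_cast Nat.choose_pos (by omega)
  set b : ℝ := ((n-1).choose (m-1) : ℝ) with hbdef
  set b2 : ℝ := ((n-1).choose m : ℝ) with hb2def
  set k : ℝ := b2 / b with hkdef
  have hk : 0 < k := div_pos hb2 hb
  have hαpos : 0 < α := by
    have hm0 : (0:ℝ) < (m:ℝ) := by exact_mod_cast (by omega : 0 < m)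
    rcases hα with h | h
    · rw [h]; norm_num
    · rw [h]; positivity
  have hαinv : 0 ≤ 1/α := (one_div_nonneg).2 hαpos.le
  have hsL : 0 < Real.sin L := Real.sin_pos_of_pos_of_lt_pi hL.1
    (lt_of_le_of_lt hL.2 (by linarith [Real.pi_pos]))
  have hφsin : Tendsto (fun r => Real.sin (φ r)) (𝓝[>] (0:ℝ)) (𝓝 (Real.sin L)) :=
    (Real.continuous_sin.tendsto L).comp hφlim
  have hev : ∀ᶠ r in 𝓝[>] (0:ℝ), Real.sin L / 2 < Real.sin (φ r) :=
    hφsin.eventually (eventually_gt_nhds (by linarith))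
  obtain ⟨u, hu, husub⟩ := mem_nhdsGT_iff_exists_Ioo_subset.1 hev
  set δ : ℝ := min (u/2) ε₀ with hδdef
  have hupos : 0 < u := hu
  have hδpos : 0 < δ := lt_min (by linarith) hε₀
  have hδε₀ : δ ≤ ε₀ := min_le_right _ _
  have hδu : δ < u := lt_of_le_of_lt (min_le_left _ _) (by linarith)
  have hsub : Set.Ioc (0:ℝ) δ ⊆ Set.Ioc 0 ε₀ := Set.Ioc_subset_Ioc_right hδε₀
  set s₀ : ℝ := Real.sin L / 2 with hs₀def
  have hs₀pos : 0 < s₀ := by positivity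
  have hs₀ : ∀ r ∈ Set.Ioc (0:ℝ) δ, s₀ < Real.sin (φ r) := by
    intro r hr
    exact husub ⟨hr.1, lt_of_le_of_lt hr.2 hδu⟩
  -- the quantities F and G
  set F : ℝ → ℝ := fun r => Real.log (Real.sin (φ r)) + Real.log (χ r) + k * Real.log (ξ r)
    with hFdef
  set G : ℝ → ℝ := fun r => b⁻¹ * (ξ r / ξ' r) ^ (m-1) *
      ((c * χ r) ^ (1/α) * Real.cos (φ r) ^ (1/α) / Real.sin (φ r) ^ m) with hGdef
  -- derivative of F is G on (0, ε₀]
  have hF : ∀ t ∈ Set.Ioc (0:ℝ) ε₀, HasDerivAt F (G t) t := by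
    intro t ht
    have hφt := hφmem t ht
    have hs : 0 < Real.sin (φ t) := Real.sin_pos_of_pos_of_lt_pi hφt.1
      (lt_trans hφt.2 (by linarith [Real.pi_pos]))
    have hco : 0 < Real.cos (φ t) := Real.cos_pos_of_mem_Ioo
      ⟨lt_trans (by linarith [Real.pi_pos]) hφt.1, hφt.2⟩
    have hξt := hξpos t ht
    have hξ't := hξ'pos t ht
    have hχt := hχpos t ht
    have hD := hφode t ht
    have h1 : HasDerivAt (fun u => Real.log (Real.sin (φ u)))
        ((Real.sin (φ t))⁻¹ * (Real.cos (φ t) *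
          (b⁻¹ * (ξ t / ξ' t) ^ (m-1) * Real.tan (φ t) *
            ((c * χ t) ^ (1/α) * Real.cos (φ t) ^ (1/α) / Real.sin (φ t) ^ m -
              cylSm n m ξ ξ' χ χ' t)))) t :=
      by have h := (Real.hasDerivAt_log hs.ne').comp t ((Real.hasDerivAt_sin (φ t)).comp t hD); exact h
    have h2 : HasDerivAt (fun u => Real.log (χ u)) ((χ t)⁻¹ * χ' t) t :=
      (Real.hasDerivAt_log hχt.ne').comp t (hχd t ht)
    have h3 : HasDerivAt (fun u => k * Real.log (ξ u)) (k * ((ξ t)⁻¹ * ξ' t)) t :=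
      ((Real.hasDerivAt_log hξt.ne').comp t (hξd t ht)).const_mul k
    have hsum : HasDerivAt F
        ((Real.sin (φ t))⁻¹ * (Real.cos (φ t) *
          (b⁻¹ * (ξ t / ξ' t) ^ (m-1) * Real.tan (φ t) *
            ((c * χ t) ^ (1/α) * Real.cos (φ t) ^ (1/α) / Real.sin (φ t) ^ m -
              cylSm n m ξ ξ' χ χ' t))) + (χ t)⁻¹ * χ' t + k * ((ξ t)⁻¹ * ξ' t)) t :=
      (h1.add h2).add h3
    have key : (ξ t / ξ' t) ^ (m-1) * (ξ' t / ξ t) ^ (m-1) = 1 := by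
      rw [← mul_pow, div_mul_div_comm, mul_comm (ξ t) (ξ' t),
        div_self (by positivity), one_pow]
    have hcyl : b⁻¹ * (ξ t / ξ' t) ^ (m-1) * cylSm n m ξ ξ' χ χ' t
        = (χ t)⁻¹ * χ' t + k * ((ξ t)⁻¹ * ξ' t) := by
      rw [cylSm]
      have h4 : b⁻¹ * (ξ t / ξ' t) ^ (m-1) *
          ((b * (χ' t / χ t) + b2 * (ξ' t / ξ t)) * (ξ' t / ξ t) ^ (m-1))
          = (b⁻¹ * b * (χ' t / χ t) + b⁻¹ * b2 * (ξ' t / ξ t)) *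
            ((ξ t / ξ' t) ^ (m-1) * (ξ' t / ξ t) ^ (m-1)) := by ring
      rw [h4, key, mul_one, inv_mul_cancel₀ hb.ne', one_mul, hkdef]
      field_simp
    have hcot : ∀ X : ℝ, (Real.sin (φ t))⁻¹ * (Real.cos (φ t) *
        (b⁻¹ * (ξ t / ξ' t) ^ (m-1) * Real.tan (φ t) * X))
        = b⁻¹ * (ξ t / ξ' t) ^ (m-1) * X := by
      intro X
      rw [Real.tan_eq_sin_div_cos]
      field_simp
    have heq : (Real.sin (φ t))⁻¹ * (Real.cos (φ t) *
          (b⁻¹ * (ξ t / ξ' t) ^ (m-1) * Real.tan (φ t) *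
            ((c * χ t) ^ (1/α) * Real.cos (φ t) ^ (1/α) / Real.sin (φ t) ^ m -
              cylSm n m ξ ξ' χ χ' t))) + (χ t)⁻¹ * χ' t + k * ((ξ t)⁻¹ * ξ' t) = G t := by
      rw [hcot, mul_sub, hcyl, hGdef]
      ring
    rw [← heq]
    exact hsum
  -- continuity of the data on (0, ε₀]
  have hφc : ContinuousOn φ (Set.Ioc 0 ε₀) := fun r hr =>
    ((hφode r hr).continuousAt).continuousWithinAt
  have hξc : ContinuousOn ξ (Set.Ioc 0 ε₀) := fun r hr =>
    ((hξd r hr).continuousAt).continuousWithinAt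
  have hχc : ContinuousOn χ (Set.Ioc 0 ε₀) := fun r hr =>
    ((hχd r hr).continuousAt).continuousWithinAt
  have hGcont : ContinuousOn G (Set.Ioc 0 δ) := by
    have hsin' : ∀ r ∈ Set.Ioc (0:ℝ) δ, Real.sin (φ r) ^ m ≠ 0 := fun r hr =>
      pow_ne_zero _ (ne_of_gt (lt_trans hs₀pos (hs₀ r hr)))
    exact (continuousOn_const.mul (((hξc.mono hsub).div (hξ'c.mono hsub)
        (fun r hr => (hξ'pos r (hsub hr)).ne')).pow _)).mul
      ((((continuousOn_const.mul (hχc.mono hsub)).rpow_const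
          (fun r hr => Or.inr hαinv)).mul
        ((Real.continuous_cos.comp_continuousOn (hφc.mono hsub)).rpow_const
          (fun r hr => Or.inr hαinv))).div
        ((Real.continuous_sin.comp_continuousOn (hφc.mono hsub)).pow m) hsin')
  have hGmeas : AEStronglyMeasurable G (volume.restrict (Set.Ioc 0 δ)) :=
    hGcont.aestronglyMeasurable measurableSet_Ioc
  -- nonnegativity of G on (0, δ]
  have hGnonneg : ∀ r ∈ Set.Ioc (0:ℝ) δ, 0 ≤ G r := by
    intro r hr
    have hr' := hsub hr
    have hs : 0 < Real.sin (φ r) := lt_trans hs₀pos (hs₀ r hr)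
    have hE : 0 ≤ (ξ r / ξ' r) ^ (m-1) :=
      pow_nonneg (div_nonneg (hξpos r hr').le (hξ'pos r hr').le) _
    have h1 : (0:ℝ) ≤ (c * χ r) ^ (1/α) := Real.rpow_nonneg (mul_nonneg hc.le (hχpos r hr').le) _
    have hco : 0 ≤ Real.cos (φ r) := le_of_lt (Real.cos_pos_of_mem_Ioo
      ⟨lt_trans (by linarith [Real.pi_pos]) (hφmem r hr').1, (hφmem r hr').2⟩)
    have h2 : (0:ℝ) ≤ Real.cos (φ r) ^ (1/α) := Real.rpow_nonneg hco _
    simp only [hGdef]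
    exact mul_nonneg (mul_nonneg (inv_nonneg.2 hb.le) hE)
      (div_nonneg (mul_nonneg h1 h2) (pow_nonneg hs.le m))
  -- integrability of G on (0, δ]
  have hGint : IntegrableOn G (Set.Ioc 0 δ) := by
    set C : ℝ := b⁻¹ * c^(1/α) * (s₀^m)⁻¹ with hCdef
    have hint' : IntegrableOn (fun ρ => C * ((ξ ρ / ξ' ρ) ^ (m-1) * χ ρ ^ (1/α)))
        (Set.Ioc 0 δ) := (hint.mono_set hsub).const_mul C
    refine hint'.mono' hGmeas ?_
    filter_upwards [ae_restrict_mem measurableSet_Ioc] with r hr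
    have hr' := hsub hr
    have hs : 0 < Real.sin (φ r) := lt_trans hs₀pos (hs₀ r hr)
    have hsge : s₀ ≤ Real.sin (φ r) := (hs₀ r hr).le
    have hco : 0 < Real.cos (φ r) := Real.cos_pos_of_mem_Ioo
      ⟨lt_trans (by linarith [Real.pi_pos]) (hφmem r hr').1, (hφmem r hr').2⟩
    have h1 : (c * χ r) ^ (1/α) = c^(1/α) * χ r ^ (1/α) :=
      Real.mul_rpow hc.le (hχpos r hr').le
    have h2 : Real.cos (φ r) ^ (1/α) ≤ 1 :=
      Real.rpow_le_one hco.le (Real.cos_le_one _) hαinv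
    have h3 : s₀ ^ m ≤ Real.sin (φ r) ^ m := pow_le_pow_left₀ hs₀pos.le hsge m
    have hcn : (0:ℝ) ≤ c^(1/α) := Real.rpow_nonneg hc.le _
    have hχn : (0:ℝ) ≤ χ r ^ (1/α) := Real.rpow_nonneg (hχpos r hr').le _
    have hE : 0 ≤ (ξ r / ξ' r) ^ (m-1) :=
      pow_nonneg (div_nonneg (hξpos r hr').le (hξ'pos r hr').le) _
    rw [Real.norm_eq_abs, abs_of_nonneg (hGnonneg r hr)]
    simp only [hGdef]
    rw [h1]
    have hnum : c^(1/α) * χ r ^ (1/α) * Real.cos (φ r) ^ (1/α)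
        ≤ c^(1/α) * χ r ^ (1/α) * 1 :=
      mul_le_mul_of_nonneg_left h2 (mul_nonneg hcn hχn)
    have hdiv : c^(1/α) * χ r ^ (1/α) * Real.cos (φ r) ^ (1/α) / Real.sin (φ r) ^ m
        ≤ c^(1/α) * χ r ^ (1/α) * 1 / s₀ ^ m :=
      div_le_div₀ (by rw [mul_one]; exact mul_nonneg hcn hχn)
        hnum (pow_pos hs₀pos m) h3
    calc b⁻¹ * (ξ r / ξ' r) ^ (m-1) *
          (c^(1/α) * χ r ^ (1/α) * Real.cos (φ r) ^ (1/α) / Real.sin (φ r) ^ m)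
        ≤ b⁻¹ * (ξ r / ξ' r) ^ (m-1) * (c^(1/α) * χ r ^ (1/α) * 1 / s₀ ^ m) :=
          mul_le_mul_of_nonneg_left hdiv (mul_nonneg (inv_nonneg.2 hb.le) hE)
      _ = C * ((ξ r / ξ' r) ^ (m-1) * χ r ^ (1/α)) := by
          rw [hCdef, mul_one]; ring
  -- FTC lower bound on F
  set K : ℝ := ∫ t in Set.Ioc (0:ℝ) δ, G t with hKdef
  have hlower : ∀ r ∈ Set.Ioc (0:ℝ) δ, F δ - K ≤ F r := by
    intro r hr
    have hrδ : r ≤ δ := hr.2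
    have hIcc : Set.Icc r δ ⊆ Set.Ioc 0 ε₀ := fun x hx =>
      ⟨lt_of_lt_of_le hr.1 hx.1, le_trans hx.2 hδε₀⟩
    have hii : IntervalIntegrable G volume r δ := by
      rw [intervalIntegrable_iff, Set.uIoc_of_le hrδ]
      exact hGint.mono_set (Set.Ioc_subset_Ioc_left hr.1.le)
    have hftc := intervalIntegral.integral_eq_sub_of_hasDerivAt
      (f := F) (f' := G)
      (fun t ht => hF t (hIcc (by rwa [Set.uIcc_of_le hrδ] at ht))) hii
    have h1 : ∫ y in r..δ, G y = ∫ y in Set.Ioc r δ, G y :=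
      intervalIntegral.integral_of_le hrδ
    have h2 : ∫ y in Set.Ioc r δ, G y ≤ K := by
      refine setIntegral_mono_set hGint ?_
        (HasSubset.Subset.eventuallyLE (Set.Ioc_subset_Ioc_left hr.1.le))
      filter_upwards [ae_restrict_mem measurableSet_Ioc] with x hx
      exact hGnonneg x hx
    rw [h1] at hftc
    linarith
  -- F tends to -∞
  obtain ⟨M, hM⟩ := hχbdd
  have hξx : Tendsto ξ (𝓝[>] (0:ℝ)) (𝓝[>] (0:ℝ)) :=
    tendsto_nhdsWithin_of_tendsto_nhds_of_eventually_within ξ hξ0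
      (Filter.eventually_of_mem (Ioo_mem_nhdsGT_of_mem ⟨le_refl (0:ℝ), hε₀⟩)
        (fun x hx => hξpos x ⟨hx.1, hx.2.le⟩))
  have hlogξ : Tendsto (fun r => k * Real.log (ξ r)) (𝓝[>] (0:ℝ)) atBot :=
    Tendsto.const_mul_atBot hk (Real.tendsto_log_nhdsGT_zero.comp hξx)
  have hlogsin : Tendsto (fun r => Real.log (Real.sin (φ r))) (𝓝[>] (0:ℝ))
      (𝓝 (Real.log (Real.sin L))) :=
    ((Real.continuousAt_log hsL.ne').tendsto).comp hφsin
  have hM' : ∀ r ∈ Set.Ioc (0:ℝ) ε₀, Real.log (χ r) ≤ Real.log (max M 1) :=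
    fun r hr => Real.log_le_log (hχpos r hr) (le_trans (hM r hr) (le_max_left _ _))
  have hU : Tendsto (fun r => (Real.log (Real.sin (φ r)) + Real.log (max M 1))
      + k * Real.log (ξ r)) (𝓝[>] (0:ℝ)) atBot :=
    (hlogsin.add_const _).add_atBot hlogξ
  have hev1 : ∀ᶠ r in 𝓝[>] (0:ℝ),
      (Real.log (Real.sin (φ r)) + Real.log (max M 1)) + k * Real.log (ξ r) < F δ - K :=
    hU.eventually (eventually_lt_atBot _)
  have hev2 : ∀ᶠ r in 𝓝[>] (0:ℝ), r ∈ Set.Ioc (0:ℝ) δ :=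
    Filter.eventually_of_mem (Ioo_mem_nhdsGT_of_mem ⟨le_refl (0:ℝ), hδpos⟩)
      (fun x hx => ⟨hx.1, hx.2.le⟩)
  obtain ⟨r, h1, h2⟩ := (hev1.and hev2).exists
  have h3 := hlower r h2
  have h4 := hM' r (hsub h2)
  have h5 : F r ≤ (Real.log (Real.sin (φ r)) + Real.log (max M 1))
      + k * Real.log (ξ r) := by
    simp only [hFdef]; linarith
  linarith
end

section
/- Let n > m ≥ 2 be integers, α = 1 or α = 1/m, c > 0 and ε > 0. Let S : (0, ε) → (0, ∞) and χ : (0, ε) → (0, ∞) be functions with lim_{r→0⁺} r^m S(r) = C(n−1, m) and lim_{r→0⁺} χ(r) = 1. For each r ∈ (0, ε), let Γ(r) be the unique number in (0, 1) satisfying Γ(r)^{1/α} (1 − Γ(r)²)^{−m/2} = S(r)/(c χ(r))^{1/α}. Then lim_{r→0⁺} (1 − Γ(r))/r² = (1/2) c^{2/(mα)} C(n−1, m)^{−2/m}. -/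
open Real Set Filter Topology Asymptotics

/-- If `r^m S(r) → C(n-1, m)` and `χ(r) → 1` as `r → 0⁺`, and
`Γ(r) ∈ (0,1)` is defined by `Γ^{1/α}(1 - Γ²)^{-m/2} = S/(cχ)^{1/α}`, then
`(1 - Γ(r))/r² → (1/2) c^{2/(mα)} C(n-1, m)^{-2/m}` as `r → 0⁺`. -/
theorem stmt13 (n m : ℕ) (hm : 2 ≤ m) (hmn : m < n)
    (α c ε : ℝ) (hα : α = 1 ∨ α = 1 / m) (hc : 0 < c) (hε : 0 < ε)
    (S χ Γ : ℝ → ℝ)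
    (hSpos : ∀ r ∈ Set.Ioo (0 : ℝ) ε, 0 < S r)
    (hχpos : ∀ r ∈ Set.Ioo (0 : ℝ) ε, 0 < χ r)
    (hSlim : Tendsto (fun r => r ^ m * S r) (𝓝[>] (0 : ℝ)) (𝓝 ((n - 1).choose m : ℝ)))
    (hχlim : Tendsto χ (𝓝[>] (0 : ℝ)) (𝓝 1))
    (hΓ : ∀ r ∈ Set.Ioo (0 : ℝ) ε, Γ r ∈ Set.Ioo (0 : ℝ) 1 ∧
      Γ r ^ (1 / α) * (1 - Γ r ^ 2) ^ (-(m : ℝ) / 2) = S r / (c * χ r) ^ (1 / α)) :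
    Tendsto (fun r => (1 - Γ r) / r ^ 2) (𝓝[>] (0 : ℝ))
      (𝓝 (1 / 2 * c ^ (2 / ((m : ℝ) * α)) * (((n - 1).choose m : ℝ)) ^ (-(2 : ℝ) / m))) := by
  have hm0 : (0:ℝ) < m := by positivity
  have hmne : (m:ℝ) ≠ 0 := hm0.ne'
  have hα0 : 0 < α := by
    rcases hα with h | h <;> rw [h] <;> positivity
  have hαne : α ≠ 0 := hα0.ne'
  set B : ℝ := ((n - 1).choose m : ℝ) with hBdef
  have hB : 0 < B := by
    have h' : 0 < (n - 1).choose m := Nat.choose_pos (by omega)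
    rw [hBdef]
    exact_mod_cast h'
  set e : ℝ := 2 / ((m:ℝ) * α) with he
  have he0 : 0 < e := by positivity
  have hexp : (1/α) * (-2/(m:ℝ)) = -e := by
    rw [he]; field_simp
  -- eventual membership in Ioo 0 ε
  have hev : ∀ᶠ r in 𝓝[>](0:ℝ), r ∈ Set.Ioo (0:ℝ) ε :=
    Ioo_mem_nhdsGT_of_mem ⟨le_rfl, hε⟩
  -- key identity
  have key : ∀ r ∈ Set.Ioo (0:ℝ) ε,
      1 - Γ r ^ 2 = Γ r ^ e * (c * χ r) ^ e * S r ^ (-2 / (m:ℝ)) := by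
    intro r hr
    obtain ⟨⟨hg0, hg1⟩, heq⟩ := hΓ r hr
    have hs := hSpos r hr
    have hw : 0 < c * χ r := mul_pos hc (hχpos r hr)
    have h1g : 0 < 1 - Γ r ^ 2 := by nlinarith
    have h2 := congrArg (fun x : ℝ => x ^ (-2 / (m:ℝ))) heq
    rw [Real.mul_rpow (by positivity) (by positivity),
        ← Real.rpow_mul hg0.le, ← Real.rpow_mul h1g.le, hexp,
        show (-(m:ℝ)/2) * (-2/(m:ℝ)) = 1 by field_simp,
        Real.rpow_one,
        Real.div_rpow hs.le (by positivity),
        ← Real.rpow_mul hw.le, hexp, Real.rpow_neg hw.le] at h2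
    have hgne : (Γ r) ^ e ≠ 0 := by positivity
    have hwne : (c * χ r) ^ e ≠ 0 := by positivity
    rw [Real.rpow_neg hg0.le] at h2
    field_simp at h2
    rw [← neg_div] at h2
    rw [h2]; ring
  -- helper: S r ^ (-2/m) = r^2 * (r^m * S r)^(-2/m)
  have helper : ∀ r ∈ Set.Ioo (0:ℝ) ε,
      S r ^ (-2 / (m:ℝ)) = r ^ 2 * (r ^ m * S r) ^ (-2 / (m:ℝ)) := by
    intro r hr
    have hr0 : 0 < r := hr.1
    have hs := hSpos r hr
    have hrm : r ^ m * S r ≥ 0 := by positivity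
    rw [Real.mul_rpow (by positivity) hs.le,
        ← Real.rpow_natCast r m, ← Real.rpow_mul hr0.le,
        show (m:ℝ) * (-2/(m:ℝ)) = -2 by field_simp,
        show (-2:ℝ) = -((2:ℕ):ℝ) by norm_num,
        Real.rpow_neg hr0.le, Real.rpow_natCast]
    have : (r:ℝ) ^ (2:ℕ) ≠ 0 := by positivity
    field_simp
  -- limits of auxiliary pieces
  have hwlim : Tendsto (fun r => c * χ r) (𝓝[>](0:ℝ)) (𝓝 c) := by
    have := (tendsto_const_nhds (x := c) (f := 𝓝[>](0:ℝ))).mul hχlim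
    simpa using this
  have hwe : Tendsto (fun r => (c * χ r) ^ e) (𝓝[>](0:ℝ)) (𝓝 (c ^ e)) :=
    hwlim.rpow_const (Or.inl hc.ne')
  have hSe : Tendsto (fun r => (r ^ m * S r) ^ (-2 / (m:ℝ))) (𝓝[>](0:ℝ))
      (𝓝 (B ^ (-2 / (m:ℝ)))) :=
    hSlim.rpow_const (Or.inl hB.ne')
  have hr2 : Tendsto (fun r : ℝ => r ^ 2) (𝓝[>](0:ℝ)) (𝓝 0) := by
    have : Tendsto (fun r : ℝ => r ^ 2) (𝓝 (0:ℝ)) (𝓝 ((0:ℝ) ^ 2)) :=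
      (continuous_pow 2).tendsto 0
    simpa using this.mono_left nhdsWithin_le_nhds
  -- squeeze: 1 - Γ² → 0
  have hsq : Tendsto (fun r => 1 - Γ r ^ 2) (𝓝[>](0:ℝ)) (𝓝 0) := by
    have hub : Tendsto (fun r => (c * χ r) ^ e * (r ^ 2 * (r ^ m * S r) ^ (-2 / (m:ℝ))))
        (𝓝[>](0:ℝ)) (𝓝 0) := by
      have := hwe.mul (hr2.mul hSe)
      simpa using this
    apply tendsto_of_tendsto_of_tendsto_of_le_of_le' tendsto_const_nhds hub
    · filter_upwards [hev] with r hr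
      obtain ⟨⟨hg0, hg1⟩, _⟩ := hΓ r hr
      nlinarith
    · filter_upwards [hev] with r hr
      obtain ⟨⟨hg0, hg1⟩, _⟩ := hΓ r hr
      have hw : 0 < c * χ r := mul_pos hc (hχpos r hr)
      have hr0 : 0 < r := hr.1
      have hs := hSpos r hr
      have hkey := key r hr
      have hhelp := helper r hr
      have hge1 : Γ r ^ e ≤ 1 := Real.rpow_le_one hg0.le hg1.le he0.le
      have hpos : 0 ≤ (c * χ r) ^ e * (r ^ 2 * (r ^ m * S r) ^ (-2 / (m:ℝ)))  := by positivity
      calc 1 - Γ r ^ 2 = Γ r ^ e * ((c * χ r) ^ e * (r ^ 2 * (r ^ m * S r) ^ (-2 / (m:ℝ)))) := by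
            rw [hkey, hhelp]; ring
        _ ≤ 1 * ((c * χ r) ^ e * (r ^ 2 * (r ^ m * S r) ^ (-2 / (m:ℝ)))) := by
            exact mul_le_mul_of_nonneg_right hge1 hpos
        _ = (c * χ r) ^ e * (r ^ 2 * (r ^ m * S r) ^ (-2 / (m:ℝ))) := by ring
  -- Γ → 1
  have hΓsq : Tendsto (fun r => Γ r ^ 2) (𝓝[>](0:ℝ)) (𝓝 1) := by
    have := (tendsto_const_nhds (x := (1:ℝ)) (f := 𝓝[>](0:ℝ))).sub hsq
    simpa using this
  have hΓlim : Tendsto Γ (𝓝[>](0:ℝ)) (𝓝 1) := by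
    have hsqrt : Tendsto (fun r => Real.sqrt (Γ r ^ 2)) (𝓝[>](0:ℝ)) (𝓝 1) := by
      have := hΓsq.sqrt
      simpa using this
    apply hsqrt.congr'
    filter_upwards [hev] with r hr
    obtain ⟨⟨hg0, _⟩, _⟩ := hΓ r hr
    exact Real.sqrt_sq hg0.le
  -- final limit
  have hF : Tendsto (fun r => Γ r ^ e * (c * χ r) ^ e * (r ^ m * S r) ^ (-2 / (m:ℝ)) / (1 + Γ r))
      (𝓝[>](0:ℝ)) (𝓝 ((1:ℝ) ^ e * c ^ e * B ^ (-2 / (m:ℝ)) / (1 + 1))) := by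
    exact (((hΓlim.rpow_const (Or.inl one_ne_zero)).mul hwe).mul hSe).div
      (tendsto_const_nhds.add hΓlim) (by norm_num)
  have hval : (1:ℝ) ^ e * c ^ e * B ^ (-2 / (m:ℝ)) / (1 + 1)
      = 1 / 2 * c ^ (2 / ((m : ℝ) * α)) * B ^ (-(2 : ℝ) / m) := by
    rw [Real.one_rpow, he]
    norm_num
    ring
  rw [← hval]
  apply hF.congr'
  filter_upwards [hev] with r hr
  obtain ⟨⟨hg0, hg1⟩, _⟩ := hΓ r hr
  have hkey := key r hr
  have hhelp := helper r hr
  have hr0 : 0 < r := hr.1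
  have h1g : (1:ℝ) + Γ r ≠ 0 := by positivity
  have hr2ne : r ^ 2 ≠ 0 := by positivity
  have h1 : 1 - Γ r ^ 2 = Γ r ^ e * (c * χ r) ^ e * (r ^ m * S r) ^ (-2 / (m:ℝ)) * r ^ 2 := by
    rw [hkey, hhelp]; ring
  field_simp
  rw [neg_div] at h1
  linarith [h1]
end

section
/- Let m ≥ 2 be an integer, α = 1 or α = 1/m, c > 0 and S_∞ > 0. Let g : (R₀, ∞) → (0, ∞) be a function satisfying g(r) = S_∞ e^{−r/α}/c^{1/α} + O(e^{−r/α}/r) as r → ∞. For each r, let Γ(r) be the unique number in (0, 1) with Γ(r)^{1/α}(1 − Γ(r)²)^{−m/2} = g(r). Then Γ(r) = e^{−r} ( S_∞^{α}/c + O(1/r) ) as r → ∞; in particular Γ(r) → 0. -/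
open Real Set Filter Topology Asymptotics

/-- If `g(r) = S∞ e^{-r/α}/c^{1/α} + O(e^{-r/α}/r)` as `r → ∞`, and
`Γ(r) ∈ (0,1)` is defined by `Γ^{1/α}(1 - Γ²)^{-m/2} = g(r)`, then
`Γ(r) = e^{-r}(S∞^α/c + O(1/r))` as `r → ∞`; in particular `Γ(r) → 0`. -/
theorem stmt15 (m : ℕ) (hm : 2 ≤ m) (α c Sinf R₀ : ℝ)
    (hα : α = 1 ∨ α = 1 / m) (hc : 0 < c) (hSinf : 0 < Sinf)
    (g Γ : ℝ → ℝ)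
    (hgpos : ∀ r ∈ Set.Ioi R₀, 0 < g r)
    (hgas : (fun r => g r - Sinf * Real.exp (-r / α) / c ^ (1 / α))
      =O[atTop] fun r => Real.exp (-r / α) / r)
    (hΓ : ∀ r ∈ Set.Ioi R₀, Γ r ∈ Set.Ioo (0 : ℝ) 1 ∧
      Γ r ^ (1 / α) * (1 - Γ r ^ 2) ^ (-(m : ℝ) / 2) = g r) :
    ((fun r => Γ r * Real.exp r - Sinf ^ α / c) =O[atTop] fun r => 1 / r) ∧
    Tendsto Γ atTop (𝓝 0) := by
  have hm0 : (0:ℝ) < m := by exact_mod_cast Nat.lt_of_lt_of_le Nat.zero_lt_two hm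
  have hαpos : 0 < α := by
    rcases hα with h | h
    · rw [h]; norm_num
    · rw [h]; positivity
  have hαne : α ≠ 0 := hαpos.ne'
  set L : ℝ := Sinf / c ^ (1/α) with hLdef
  have hLpos : 0 < L := div_pos hSinf (Real.rpow_pos_of_pos hc _)
  set γ : ℝ := α * m / 2 with hγdef
  have hγ0 : 0 ≤ γ := by positivity
  set p : ℝ := max γ 1 with hpdef
  have hp1 : 1 ≤ p := le_max_right _ _
  set h : ℝ → ℝ := fun r => g r * Real.exp (r/α) with hhdef
  -- key exp cancellation
  have key : ∀ r : ℝ, Real.exp (-r/α) * Real.exp (r/α) = 1 := fun r => by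
    rw [← Real.exp_add, neg_div, neg_add_cancel, Real.exp_zero]
  have hhL : (fun r => h r - L) =O[atTop] fun r => 1/r := by
    have H := hgas.mul (isBigO_refl (fun r => Real.exp (r/α)) atTop)
    refine H.congr (fun r => ?_) (fun r => ?_)
    · show (g r - Sinf * Real.exp (-r/α) / c ^ (1/α)) * Real.exp (r/α) = h r - L
      simp only [hhdef, hLdef]
      linear_combination (-(Sinf / c ^ (1/α))) * key r
    · show Real.exp (-r/α) / r * Real.exp (r/α) = 1/r
      rw [div_mul_eq_mul_div, key r]
  have h1r0 : Tendsto (fun r : ℝ => 1/r) atTop (𝓝 0) := by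
    simpa [one_div] using tendsto_inv_atTop_zero (𝕜 := ℝ)
  have h0 : Tendsto (fun r => h r - L) atTop (𝓝 0) := hhL.trans_tendsto h1r0
  have htend : Tendsto h atTop (𝓝 L) := by
    have := h0.add_const L
    simpa using this
  have hdiff : DifferentiableAt ℝ (fun x : ℝ => x ^ α) L :=
    Real.differentiableAt_rpow_const_of_ne α hLpos.ne'
  have hfO : (fun r => h r ^ α - L ^ α) =O[atTop] fun r => 1/r :=
    (hdiff.isBigO_sub.comp_tendsto htend).trans hhL
  have hLα : L ^ α = Sinf ^ α / c := by
    rw [hLdef, Real.div_rpow hSinf.le (Real.rpow_nonneg hc.le _), ← Real.rpow_mul hc.le,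
      one_div, inv_mul_cancel₀ hαne, Real.rpow_one]
  set M : ℝ := (L + 1) ^ α with hMdef
  have hM0 : 0 ≤ M := Real.rpow_nonneg (by linarith) _
  clear_value L γ p h M
  have hb : ∀ᶠ r in atTop, |h r - L| ≤ 1 := by
    have := Metric.tendsto_nhds.mp h0 1 one_pos
    filter_upwards [this] with r hr
    rw [Real.dist_eq, sub_zero] at hr
    exact hr.le
  -- main pointwise facts
  have hmain : ∀ᶠ r in atTop,
      Γ r * Real.exp r = h r ^ α * (1 - Γ r ^ 2) ^ γ ∧
      0 ≤ (1 - Γ r ^ 2) ^ γ ∧ (1 - Γ r ^ 2) ^ γ ≤ 1 ∧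
      1 - (1 - Γ r ^ 2) ^ γ ≤ p * M ^ 2 * (1/r) := by
    filter_upwards [eventually_gt_atTop R₀, eventually_ge_atTop 1, hb] with r hr hr1 hbr
    obtain ⟨⟨hG0, hG1⟩, heq⟩ := hΓ r hr
    have hr0 : (0:ℝ) < r := lt_of_lt_of_le one_pos hr1
    have ht0 : 0 < 1 - Γ r ^ 2 := by nlinarith
    have ht1 : 1 - Γ r ^ 2 ≤ 1 := by nlinarith
    have hgr := hgpos r hr
    have e1 : g r * (1 - Γ r ^ 2) ^ ((m:ℝ)/2) = Γ r ^ (1/α) := by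
      rw [← heq, mul_assoc, ← Real.rpow_add ht0,
        show -(m:ℝ)/2 + (m:ℝ)/2 = 0 by ring, Real.rpow_zero, mul_one]
    have e2a : ((Γ r) ^ (1/α)) ^ α = Γ r := by
      rw [← Real.rpow_mul hG0.le, one_div, inv_mul_cancel₀ hαne, Real.rpow_one]
    have e2 : Γ r = g r ^ α * (1 - Γ r ^ 2) ^ γ := by
      conv_lhs => rw [← e2a, ← e1]
      rw [Real.mul_rpow hgr.le (Real.rpow_nonneg ht0.le _), ← Real.rpow_mul ht0.le,
        show (m:ℝ)/2 * α = γ by rw [hγdef]; ring]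
    have eexp : Real.exp (r/α) ^ α = Real.exp r := by
      rw [← Real.exp_mul, div_mul_cancel₀ r hαne]
    have e3 : Γ r * Real.exp r = h r ^ α * (1 - Γ r ^ 2) ^ γ := by
      rw [hhdef]
      show Γ r * Real.exp r = (g r * Real.exp (r/α)) ^ α * (1 - Γ r ^ 2) ^ γ
      rw [Real.mul_rpow hgr.le (Real.exp_pos _).le, eexp]
      calc Γ r * Real.exp r = g r ^ α * (1 - Γ r ^ 2) ^ γ * Real.exp r := by rw [← e2]
        _ = g r ^ α * Real.exp r * (1 - Γ r ^ 2) ^ γ := by ring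
    have hw0 : 0 ≤ (1 - Γ r ^ 2) ^ γ := Real.rpow_nonneg ht0.le _
    have hw1 : (1 - Γ r ^ 2) ^ γ ≤ 1 := Real.rpow_le_one ht0.le ht1 hγ0
    refine ⟨e3, hw0, hw1, ?_⟩
    -- Bernoulli bound
    have hbern : 1 + p * (-(Γ r ^ 2)) ≤ (1 + -(Γ r ^ 2)) ^ p :=
      one_add_mul_self_le_rpow_one_add (by nlinarith) hp1
    have hBB : 1 - p * Γ r ^ 2 ≤ (1 - Γ r ^ 2) ^ p := by
      calc 1 - p * Γ r ^ 2 = 1 + p * -Γ r ^ 2 := by ring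
        _ ≤ (1 + -Γ r ^ 2) ^ p := hbern
        _ = (1 - Γ r ^ 2) ^ p := by rw [← sub_eq_add_neg]
    have hpe : (1 - Γ r ^ 2) ^ p ≤ (1 - Γ r ^ 2) ^ γ :=
      Real.rpow_le_rpow_of_exponent_ge ht0 ht1 (by rw [hpdef]; exact le_max_left _ _)
    -- bound on Γ r
    have hhr0 : 0 < h r := by
      simp only [hhdef]; exact mul_pos hgr (Real.exp_pos _)
    have hhle : h r ≤ L + 1 := by have := abs_le.mp hbr; linarith
    have hMα : h r ^ α ≤ M := hMdef ▸ Real.rpow_le_rpow hhr0.le hhle hαpos.le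
    have hΓexp : Γ r * Real.exp r ≤ M := by
      rw [e3]
      calc h r ^ α * (1 - Γ r ^ 2) ^ γ ≤ M * 1 := mul_le_mul hMα hw1 hw0 hM0
        _ = M := mul_one M
    have hexpr : r ≤ Real.exp r := by linarith [Real.add_one_le_exp r]
    have hΓr : Γ r * r ≤ M := le_trans (mul_le_mul_of_nonneg_left hexpr hG0.le) hΓexp
    have hGle : Γ r ≤ M * (1/r) := by
      rw [mul_one_div, le_div_iff₀ hr0]; exact hΓr
    have h1rle : 1/r ≤ 1 := by rw [div_le_one hr0]; exact hr1
    have h1rpos : 0 < 1/r := by positivity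
    have hG2 : Γ r ^ 2 ≤ (M * (1/r)) ^ 2 := by
      apply pow_le_pow_left₀ hG0.le hGle
    have hp0 : 0 < p := lt_of_lt_of_le one_pos hp1
    calc 1 - (1 - Γ r ^ 2) ^ γ ≤ p * Γ r ^ 2 := by linarith
      _ ≤ p * (M * (1/r)) ^ 2 := mul_le_mul_of_nonneg_left hG2 hp0.le
      _ = p * M ^ 2 * ((1/r) * (1/r)) := by ring
      _ ≤ p * M ^ 2 * (1/r) :=
          mul_le_mul_of_nonneg_left (mul_le_of_le_one_right h1rpos.le h1rle)
            (mul_nonneg hp0.le (sq_nonneg M))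
  -- assemble
  have hu : (fun r => (h r ^ α - L ^ α) * (1 - Γ r ^ 2) ^ γ) =O[atTop] fun r => 1/r := by
    refine IsBigO.trans (IsBigO.of_bound 1 ?_) hfO
    filter_upwards [hmain] with r hr
    obtain ⟨_, hw0, hw1, _⟩ := hr
    rw [one_mul, norm_mul]
    calc ‖h r ^ α - L ^ α‖ * ‖(1 - Γ r ^ 2) ^ γ‖
        ≤ ‖h r ^ α - L ^ α‖ * 1 := by
          apply mul_le_mul_of_nonneg_left _ (norm_nonneg _)
          rw [Real.norm_eq_abs, abs_of_nonneg hw0]; exact hw1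
      _ = ‖h r ^ α - L ^ α‖ := mul_one _
  have hv : (fun r => L ^ α * ((1 - Γ r ^ 2) ^ γ - 1)) =O[atTop] fun r => 1/r := by
    rw [isBigO_iff]
    refine ⟨L ^ α * (p * M ^ 2), ?_⟩
    filter_upwards [hmain, eventually_ge_atTop 1] with r hr hr1
    obtain ⟨_, hw0, hw1, hwb⟩ := hr
    have hr0 : (0:ℝ) < r := lt_of_lt_of_le one_pos hr1
    have hLα0 : 0 ≤ L ^ α := Real.rpow_nonneg hLpos.le _
    have h1rpos : 0 < 1/r := by positivity
    rw [norm_mul, Real.norm_eq_abs, Real.norm_eq_abs, Real.norm_eq_abs,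
      abs_of_nonneg hLα0, abs_of_pos h1rpos, abs_sub_comm,
      abs_of_nonneg (by linarith : (0:ℝ) ≤ 1 - (1 - Γ r ^ 2) ^ γ)]
    calc L ^ α * (1 - (1 - Γ r ^ 2) ^ γ) ≤ L ^ α * (p * M ^ 2 * (1/r)) :=
          mul_le_mul_of_nonneg_left hwb hLα0
      _ = L ^ α * (p * M ^ 2) * (1/r) := by ring
  have heq2 : (fun r => (h r ^ α - L ^ α) * (1 - Γ r ^ 2) ^ γ
      + L ^ α * ((1 - Γ r ^ 2) ^ γ - 1)) =ᶠ[atTop]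
      (fun r => Γ r * Real.exp r - Sinf ^ α / c) := by
    filter_upwards [hmain] with r hr
    obtain ⟨he, _, _, _⟩ := hr
    rw [← hLα, he]; ring
  have hO : (fun r => Γ r * Real.exp r - Sinf ^ α / c) =O[atTop] fun r => 1/r :=
    (hu.add hv).congr' heq2 EventuallyEq.rfl
  refine ⟨hO, ?_⟩
  have htend1 : Tendsto (fun r => Γ r * Real.exp r) atTop (𝓝 (Sinf ^ α / c)) := by
    have := (hO.trans_tendsto h1r0).add_const (Sinf ^ α / c)
    simpa using this
  have := htend1.mul Real.tendsto_exp_neg_atTop_nhds_zero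
  rw [mul_zero] at this
  refine this.congr fun r => ?_
  rw [mul_assoc, ← Real.exp_add, add_neg_cancel, Real.exp_zero, mul_one]
end

section
/- Let n ≥ 3 and 2 ≤ m ≤ n be integers, α = 1 or α = 1/m, and c > 0. Let ξ, χ : (R₀, ∞) → ℝ be continuously differentiable with ξ, ξ', χ > 0. Assume: (i) there is κ > 0 with (ξ(r)/ξ'(r))^{m−1} χ(r)^{1/α} ≥ κ for all large r; (ii) S_m is differentiable and positive, the function r ↦ S_m(r)/(c χ(r))^{1/α} is nonincreasing, and Γ(r) ∈ (0, 1) is defined by Γ(r)^{1/α}(1 − Γ(r)²)^{−m/2} = S_m(r)/(c χ(r))^{1/α}; (iii) the function r ↦ [Γ(r)(1 − Γ(r)²)/(1 + Γ(r)²(mα − 1))] · (d/dr)[ log( χ(r)^{1/α} / S_m(r) ) ] tends to 0 as r → ∞. If y : (R₀, ∞) → (0, 1) is differentiable, satisfies y'(r) = C(n−1, m−1)^{−1} (ξ(r)/ξ'(r))^{m−1} ((1 − y²)/y) [ S_m(r) − (c χ(r))^{1/α} y^{1/α}(1 − y²)^{−m/2} ], and satisfies limsup_{r→∞} y(r) <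 1, then lim_{r→∞} ( y(r) − Γ(r) ) = 0. -/
open Real Set Filter Topology Asymptotics

lemma escape_up (y v : ℝ → ℝ) (R θ δ : ℝ) (hδ : 0 < δ)
    (hd : ∀ u, R ≤ u → HasDerivAt y (v u) u)
    (hpush : ∀ u, R ≤ u → y u < θ → δ ≤ v u) :
    ∀ᶠ r in atTop, θ ≤ y r := by
  have hcont : ContinuousOn y (Ici R) := fun u hu => (hd u hu).continuousAt.continuousWithinAt
  have hB : ∃ t, R ≤ t ∧ θ ≤ y t := by
    by_contra h
    push_neg at h
    have hg' : ∀ u, R ≤ u → HasDerivAt (fun r => y r - δ * r) (v u - δ) u := by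
      intro u hu
      have h1 : HasDerivAt (fun r : ℝ => δ * r) δ u := by
        simpa using (hasDerivAt_id u).const_mul δ
      exact (hd u hu).sub h1
    have hg : MonotoneOn (fun r => y r - δ * r) (Ici R) := by
      apply monotoneOn_of_deriv_nonneg (convex_Ici R)
      · exact hcont.sub ((continuous_const.mul continuous_id).continuousOn)
      · intro u hu
        rw [interior_Ici] at hu
        exact ((hg' u hu.le).differentiableAt).differentiableWithinAt
      · intro u hu
        rw [interior_Ici] at hu
        rw [(hg' u hu.le).deriv]
        have := hpush u hu.le (h u hu.le)
        linarith
    obtain ⟨t, ht⟩ : ∃ t, t = R + (θ - y R + 1) / δ := ⟨_, rfl⟩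
    have hyR : y R < θ := h R le_rfl
    have hdiv : 0 ≤ (θ - y R + 1) / δ := div_nonneg (by linarith) hδ.le
    have htR : R ≤ t := by rw [ht]; linarith
    have h2 := hg (self_mem_Ici) (mem_Ici.2 htR) htR
    have hnum : δ * (t - R) = θ - y R + 1 := by
      have h3 : t - R = (θ - y R + 1) / δ := by rw [ht]; ring
      rw [h3, mul_div_cancel₀ _ hδ.ne']
    have := h t htR
    simp only at h2
    nlinarith
  obtain ⟨t₀, ht₀R, ht₀⟩ := hB
  rw [eventually_atTop]
  refine ⟨t₀, fun r hr => ?_⟩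
  by_contra hyr
  push_neg at hyr
  set S := Icc t₀ r ∩ y ⁻¹' (Ici θ) with hSdef
  have hsub : Icc t₀ r ⊆ Ici R := fun x hx => mem_Ici.2 (ht₀R.trans hx.1)
  have hScl : IsClosed S :=
    (hcont.mono hsub).preimage_isClosed_of_isClosed isClosed_Icc isClosed_Ici
  have hScomp : IsCompact S := isCompact_Icc.of_isClosed_subset hScl inter_subset_left
  have hSne : S.Nonempty := ⟨t₀, ⟨le_rfl, hr⟩, ht₀⟩
  obtain ⟨s, hs⟩ : ∃ s, s = sSup S := ⟨_, rfl⟩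
  have hsS : s ∈ S := hs ▸ hScomp.sSup_mem hSne
  have hsr : s < r := lt_of_le_of_ne hsS.1.2 (by
    rintro rfl
    exact absurd hsS.2 (not_le.2 hyr))
  have hlt : ∀ u, s < u → u ≤ r → y u < θ := by
    intro u hsu hur
    by_contra hy
    push_neg at hy
    have huS : u ∈ S := ⟨⟨hsS.1.1.trans hsu.le, hur⟩, hy⟩
    exact absurd (hs ▸ le_csSup hScomp.bddAbove huS) (not_le.2 hsu)
  have hmono : StrictMonoOn y (Icc s r) := by
    apply strictMonoOn_of_deriv_pos (convex_Icc s r)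
      (hcont.mono (fun x hx => mem_Ici.2 ((ht₀R.trans hsS.1.1).trans hx.1)))
    intro u hu
    rw [interior_Icc] at hu
    have huR : R ≤ u := (ht₀R.trans hsS.1.1).trans hu.1.le
    rw [(hd u huR).deriv]
    exact hδ.trans_le (hpush u huR (hlt u hu.1 hu.2.le))
  have h3 := hmono (left_mem_Icc.2 hsr.le) (right_mem_Icc.2 hsr.le) hsr
  have h4 : θ ≤ y s := hsS.2
  linarith

lemma escape_down (y v : ℝ → ℝ) (R θ δ : ℝ) (hδ : 0 < δ)
    (hd : ∀ u, R ≤ u → HasDerivAt y (v u) u)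
    (hpush : ∀ u, R ≤ u → θ < y u → v u ≤ -δ) :
    ∀ᶠ r in atTop, y r ≤ θ := by
  have h := escape_up (fun r => -y r) (fun r => -v r) R (-θ) δ hδ
    (fun u hu => (hd u hu).neg)
    (fun u hu hlt => by
      have hlt' : -y u < -θ := hlt
      have := hpush u hu (by linarith)
      show δ ≤ -v u
      linarith)
  filter_upwards [h] with r hr
  have hr' : -θ ≤ -y r := hr
  linarith

/-- The right-hand side `G(r, y)` of the soliton equation written in terms of
`y = cos φ`. -/
noncomputable def solitonG (n m : ℕ) (α c : ℝ) (ξ ξ' χ χ' : ℝ → ℝ) (r y : ℝ) : ℝ :=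
  (((n - 1).choose (m - 1) : ℝ))⁻¹ * (ξ r / ξ' r) ^ (m - 1) * ((1 - y ^ 2) / y) *
    (cylSm n m ξ ξ' χ χ' r -
      (c * χ r) ^ (1 / α) * y ^ (1 / α) * (1 - y ^ 2) ^ (-(m : ℝ) / 2))

set_option maxHeartbeats 2000000 in
/-- Every rotationally symmetric soliton `y = cos φ` with
`limsup y < 1` asymptotically attains the cylinder angle determined by `Γ`:
`y(r) - Γ(r) → 0` as `r → ∞`. -/
theorem stmt16 (n m : ℕ) (hn : 3 ≤ n) (hm : 2 ≤ m) (hmn : m ≤ n)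
    (α c R₀ : ℝ) (hα : α = 1 ∨ α = 1 / m) (hc : 0 < c)
    (ξ χ ξ' χ' SmD : ℝ → ℝ)
    (hξd : ∀ r ∈ Set.Ioi R₀, HasDerivAt ξ (ξ' r) r)
    (hχd : ∀ r ∈ Set.Ioi R₀, HasDerivAt χ (χ' r) r)
    (hξ'c : ContinuousOn ξ' (Set.Ioi R₀)) (hχ'c : ContinuousOn χ' (Set.Ioi R₀))
    (hξpos : ∀ r ∈ Set.Ioi R₀, 0 < ξ r)
    (hξ'pos : ∀ r ∈ Set.Ioi R₀, 0 < ξ' r)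
    (hχpos : ∀ r ∈ Set.Ioi R₀, 0 < χ r)
    (κ : ℝ) (hκ : 0 < κ)
    (hbound : ∀ᶠ r in atTop, κ ≤ (ξ r / ξ' r) ^ (m - 1) * χ r ^ (1 / α))
    (hSd : ∀ r ∈ Set.Ioi R₀, HasDerivAt (cylSm n m ξ ξ' χ χ') (SmD r) r)
    (hSpos : ∀ r ∈ Set.Ioi R₀, 0 < cylSm n m ξ ξ' χ χ' r)
    (hSmono : AntitoneOn (fun r => cylSm n m ξ ξ' χ χ' r / (c * χ r) ^ (1 / α))
      (Set.Ioi R₀))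
    (Γ : ℝ → ℝ)
    (hΓ : ∀ r ∈ Set.Ioi R₀, Γ r ∈ Set.Ioo (0 : ℝ) 1 ∧
      Γ r ^ (1 / α) * (1 - Γ r ^ 2) ^ (-(m : ℝ) / 2) =
        cylSm n m ξ ξ' χ χ' r / (c * χ r) ^ (1 / α))
    (ℓ : ℝ → ℝ)
    (hℓ : ∀ r ∈ Set.Ioi R₀,
      HasDerivAt (fun t => Real.log (χ t ^ (1 / α) / cylSm n m ξ ξ' χ χ' t)) (ℓ r) r)
    (hℓ0 : Tendsto (fun r => Γ r * (1 - Γ r ^ 2) / (1 + Γ r ^ 2 * ((m : ℝ) * α - 1)) * ℓ r)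
      atTop (𝓝 0))
    (y : ℝ → ℝ)
    (hymem : ∀ r ∈ Set.Ioi R₀, y r ∈ Set.Ioo (0 : ℝ) 1)
    (hyode : ∀ r ∈ Set.Ioi R₀, HasDerivAt y (solitonG n m α c ξ ξ' χ χ' r (y r)) r)
    (hysup : ∃ b : ℝ, b < 1 ∧ ∀ᶠ r in atTop, y r ≤ b) :
    Tendsto (fun r => y r - Γ r) atTop (𝓝 0) := by
  classical
  obtain ⟨b₀, hb₀, hyb₀⟩ := hysup
  have hCpos : (0:ℝ) < ((n-1).choose (m-1) : ℝ) := by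
    exact_mod_cast Nat.choose_pos (by omega)
  have hβ : 0 < 1/α := by
    rcases hα with h|h
    · rw [h]; norm_num
    · rw [h, one_div_one_div]
      have : 0 < m := by omega
      exact_mod_cast this
  set f : ℝ → ℝ := fun x => x ^ (1/α) * (1 - x^2) ^ (-(m:ℝ)/2) with hfdef
  have hmR : (2:ℝ) ≤ (m:ℝ) := by exact_mod_cast hm
  have hfmono : StrictMonoOn f (Ioo (0:ℝ) 1) := by
    intro p hp q hq hpq
    have h1 : p ^ (1/α) < q ^ (1/α) := Real.rpow_lt_rpow hp.1.le hpq hβ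
    have h2 : (1 - p^2) ^ (-(m:ℝ)/2) < (1 - q^2) ^ (-(m:ℝ)/2) := by
      apply Real.rpow_lt_rpow_of_neg
      · nlinarith [hq.1, hq.2]
      · nlinarith [hp.1, hq.1]
      · linarith
    have hp1 : (0:ℝ) ≤ p ^ (1/α) := Real.rpow_nonneg hp.1.le _
    have hp2 : (0:ℝ) ≤ (1 - p^2) ^ (-(m:ℝ)/2) :=
      Real.rpow_nonneg (by nlinarith [hp.1, hp.2]) _
    exact mul_lt_mul'' h1 h2 hp1 hp2
  have hfm : MonotoneOn f (Ioo (0:ℝ) 1) := hfmono.monotoneOn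
  have hcχ : ∀ r ∈ Set.Ioi R₀, (0:ℝ) < (c * χ r) ^ (1/α) :=
    fun r hr => Real.rpow_pos_of_pos (mul_pos hc (hχpos r hr)) _
  -- Γ is antitone
  have hΓanti : AntitoneOn Γ (Set.Ioi R₀) := by
    intro r₁ h₁ r₂ h₂ h12
    have hmon : cylSm n m ξ ξ' χ χ' r₂ / (c*χ r₂)^(1/α) ≤
        cylSm n m ξ ξ' χ χ' r₁ / (c*χ r₁)^(1/α) := hSmono h₁ h₂ h12
    rw [← (hΓ r₂ h₂).2, ← (hΓ r₁ h₁).2] at hmon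
    have hmon' : f (Γ r₂) ≤ f (Γ r₁) := hmon
    by_contra hlt
    push_neg at hlt
    have := hfmono (hΓ r₁ h₁).1 (hΓ r₂ h₂).1 hlt
    linarith
  -- the limit L of Γ
  have hmaxmem : ∀ r : ℝ, max r (R₀+1) ∈ Set.Ioi R₀ :=
    fun r => lt_of_lt_of_le (by linarith : R₀ < R₀ + 1) (le_max_right _ _)
  have hΓt_anti : Antitone (fun r => Γ (max r (R₀+1))) := by
    intro a b hab
    exact hΓanti (hmaxmem a) (hmaxmem b) (max_le_max hab le_rfl)
  have hbdd : BddBelow (Set.range fun r => Γ (max r (R₀+1))) :=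
    ⟨0, by rintro _ ⟨r, rfl⟩; exact ((hΓ _ (hmaxmem r)).1.1).le⟩
  set L := ⨅ r : ℝ, Γ (max r (R₀+1)) with hLdef
  have hΓttend : Tendsto (fun r => Γ (max r (R₀+1))) atTop (𝓝 L) :=
    tendsto_atTop_ciInf hΓt_anti hbdd
  have hΓtend : Tendsto Γ atTop (𝓝 L) := by
    apply hΓttend.congr'
    filter_upwards [eventually_ge_atTop (R₀+1)] with r hr
    rw [max_eq_left hr]
  have hL0 : 0 ≤ L := le_ciInf fun r => ((hΓ _ (hmaxmem r)).1.1).le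
  have hL1 : L < 1 := lt_of_le_of_lt (ciInf_le hbdd 0) ((hΓ _ (hmaxmem 0)).1.2)
  have hΓgeL : ∀ r ∈ Set.Ioi R₀, L ≤ Γ r := by
    intro r hr
    exact le_trans (ciInf_le hbdd r) (hΓanti hr (hmaxmem r) (le_max_left _ _))
  -- a bound b' : L < b' < 1 with y ≤ b' eventually
  set b' := max b₀ ((L+1)/2) with hb'def
  have hb'1 : b' < 1 := max_lt hb₀ (by linarith)
  have hLb' : L < b' := lt_of_lt_of_le (by linarith : L < (L+1)/2) (le_max_right _ _)
  have hb'0 : 0 < b' := lt_of_lt_of_le (by linarith : (0:ℝ) < (L+1)/2) (le_max_right _ _)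
  have hyb' : ∀ᶠ r in atTop, y r ≤ b' := hyb₀.mono (fun r h => h.trans (le_max_left _ _))
  -- coefficient lower bound
  set A : ℝ → ℝ := fun r =>
    (((n-1).choose (m-1):ℝ))⁻¹ * ((ξ r / ξ' r)^(m-1) * (c * χ r)^(1/α)) with hAdef
  set K₀ := (((n-1).choose (m-1):ℝ))⁻¹ * (κ * c ^ (1/α)) with hK₀def
  have hK₀pos : 0 < K₀ :=
    mul_pos (inv_pos.2 hCpos) (mul_pos hκ (Real.rpow_pos_of_pos hc _))
  have hAK : ∀ᶠ r in atTop, K₀ ≤ A r := by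
    filter_upwards [hbound, eventually_gt_atTop R₀] with r h1 h2
    have hmul : (c * χ r) ^ (1/α) = c ^ (1/α) * χ r ^ (1/α) :=
      Real.mul_rpow hc.le (hχpos r h2).le
    have hstep : κ * c^(1/α) ≤ (ξ r/ξ' r)^(m-1) * (c * χ r)^(1/α) := by
      rw [hmul]
      calc κ * c^(1/α) ≤ ((ξ r/ξ' r)^(m-1) * χ r^(1/α)) * c^(1/α) :=
            mul_le_mul_of_nonneg_right h1 (Real.rpow_nonneg hc.le _)
        _ = (ξ r/ξ' r)^(m-1) * (c^(1/α) * χ r^(1/α)) := by ring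
    have : K₀ ≤ (((n-1).choose (m-1):ℝ))⁻¹ * ((ξ r/ξ' r)^(m-1) * (c * χ r)^(1/α)) := by
      rw [hK₀def]
      exact mul_le_mul_of_nonneg_left hstep (inv_pos.2 hCpos).le
    exact this
  -- rewrite the ODE
  have hode : ∀ r ∈ Set.Ioi R₀, solitonG n m α c ξ ξ' χ χ' r (y r)
      = A r * ((1 - (y r)^2)/(y r) * (f (Γ r) - f (y r))) := by
    intro r hr
    have hX := hcχ r hr
    have h2 := (hΓ r hr).2
    rw [eq_div_iff hX.ne'] at h2
    have hSr : cylSm n m ξ ξ' χ χ' r = (c*χ r)^(1/α) * f (Γ r) := by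
      rw [← h2]; simp only [hfdef]; ring
    unfold solitonG
    rw [hSr]
    simp only [hfdef, hAdef]
    ring
  -- y tends to L
  have hytend : Tendsto y atTop (𝓝 L) := by
    rw [tendsto_order]
    constructor
    · intro a ha
      rcases le_or_gt a 0 with h0|h0
      · filter_upwards [eventually_gt_atTop R₀] with r hr
        exact lt_of_le_of_lt h0 (hymem r hr).1
      · have hθmem : (a + L)/2 ∈ Set.Ioo (0:ℝ) 1 := ⟨by linarith, by linarith⟩
        set θ := (a + L)/2 with hθdef
        have hLmem : L ∈ Set.Ioo (0:ℝ) 1 := ⟨by linarith, hL1⟩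
        have hfLθ : f θ < f L := hfmono hθmem hLmem (by rw [hθdef]; linarith)
        set δ := K₀ * ((1 - θ^2) * (f L - f θ)) with hδdef
        have hδpos : 0 < δ := by
          apply mul_pos hK₀pos
          apply mul_pos _ (by linarith)
          nlinarith [hθmem.1, hθmem.2]
        obtain ⟨R₁, hR₁⟩ := eventually_atTop.1 (hAK.and (eventually_gt_atTop R₀))
        have hev := escape_up y (fun u => solitonG n m α c ξ ξ' χ χ' u (y u)) R₁ θ δ hδpos
          (fun u hu => hyode u (hR₁ u hu).2)
          (fun u hu hyθ => by
            have hu' : u ∈ Set.Ioi R₀ := (hR₁ u hu).2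
            have hA := (hR₁ u hu).1
            show δ ≤ solitonG n m α c ξ ξ' χ χ' u (y u)
            rw [hode u hu']
            have hym := hymem u hu'
            have hΓm := (hΓ u hu').1
            have hfy : f (y u) < f θ := hfmono hym hθmem hyθ
            have hfΓ : f L ≤ f (Γ u) := hfm hLmem hΓm (hΓgeL u hu')
            have hB : 1 - θ^2 ≤ (1 - (y u)^2)/(y u) := by
              have h1 : 1 - θ^2 ≤ 1 - (y u)^2 := by nlinarith [hym.1, hθmem.1]
              have h2 : 1 - (y u)^2 ≤ (1 - (y u)^2)/(y u) := by
                rw [le_div_iff₀ hym.1]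
                nlinarith [mul_nonneg (by nlinarith [hym.1, hym.2] : (0:ℝ) ≤ 1 - (y u)^2)
                  (by linarith [hym.2] : (0:ℝ) ≤ 1 - y u)]
              linarith
            have hstep : (1-θ^2) * (f L - f θ) ≤
                (1 - (y u)^2)/(y u) * (f (Γ u) - f (y u)) :=
              mul_le_mul hB (by linarith) (by linarith)
                (le_trans (by nlinarith [hθmem.1, hθmem.2]) hB)
            calc δ = K₀ * ((1-θ^2) * (f L - f θ)) := hδdef
              _ ≤ A u * ((1 - (y u)^2)/(y u) * (f (Γ u) - f (y u))) := by
                  apply mul_le_mul hA hstep _ (hK₀pos.le.trans hA)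
                  nlinarith [hθmem.1, hθmem.2])
        filter_upwards [hev] with r hr
        have : a < θ := by rw [hθdef]; linarith
        linarith
    · intro a ha
      set ε := min ((a - L)/2) ((b' - L)/2) with hεdef
      have hεpos : 0 < ε := lt_min (by linarith) (by linarith)
      set θ := L + ε with hθdef
      have hε1 : ε ≤ (a - L)/2 := min_le_left _ _
      have hε2 : ε ≤ (b' - L)/2 := min_le_right _ _
      have hθa : θ < a := by rw [hθdef]; linarith
      have hθb' : θ < b' := by rw [hθdef]; linarith
      have hθmem : θ ∈ Set.Ioo (0:ℝ) 1 := ⟨by rw [hθdef]; linarith, hθb'.trans hb'1⟩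
      set mid := L + ε/2 with hmiddef
      have hmidmem : mid ∈ Set.Ioo (0:ℝ) 1 := ⟨by rw [hmiddef]; linarith,
        by have : mid < θ := by rw [hmiddef, hθdef]; linarith
           linarith [hθmem.2]⟩
      have hmidθ : mid < θ := by rw [hmiddef, hθdef]; linarith
      have hΓev : ∀ᶠ r in atTop, Γ r < mid :=
        hΓtend.eventually_lt_const (by rw [hmiddef]; linarith)
      have hfθ : f mid < f θ := hfmono hmidmem hθmem hmidθ
      set δ := K₀ * ((1 - b'^2) * (f θ - f mid)) with hδdef
      have hδpos : 0 < δ := by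
        apply mul_pos hK₀pos
        apply mul_pos _ (by linarith)
        nlinarith [hb'0, hb'1]
      obtain ⟨R₁, hR₁⟩ := eventually_atTop.1
        (hAK.and ((eventually_gt_atTop R₀).and (hyb'.and hΓev)))
      have hev := escape_down y (fun u => solitonG n m α c ξ ξ' χ χ' u (y u)) R₁ θ δ hδpos
        (fun u hu => hyode u (hR₁ u hu).2.1)
        (fun u hu hyθ => by
          obtain ⟨hA, hu', hyb, hΓlt⟩ := hR₁ u hu
          show solitonG n m α c ξ ξ' χ χ' u (y u) ≤ -δ
          rw [hode u hu']
          have hym := hymem u hu'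
          have hΓm := (hΓ u hu').1
          have hfy : f θ < f (y u) := hfmono hθmem hym hyθ
          have hfΓ : f (Γ u) < f mid := hfmono hΓm hmidmem hΓlt
          have hb'2 : 0 < 1 - b'^2 := by nlinarith [hb'0, hb'1]
          have hB : 1 - b'^2 ≤ (1 - (y u)^2)/(y u) := by
            have h1 : 1 - b'^2 ≤ 1 - (y u)^2 := by nlinarith [hym.1]
            have h2 : 1 - (y u)^2 ≤ (1 - (y u)^2)/(y u) := by
              rw [le_div_iff₀ hym.1]
              nlinarith [mul_nonneg (by nlinarith [hym.1, hym.2] : (0:ℝ) ≤ 1 - (y u)^2)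
                (by linarith [hym.2] : (0:ℝ) ≤ 1 - y u)]
            linarith
          have hD : f (Γ u) - f (y u) ≤ f mid - f θ := by linarith
          have hDneg : f mid - f θ < 0 := by linarith
          have hBnn : 0 ≤ (1 - (y u)^2)/(y u) := le_trans hb'2.le hB
          have hAnn : 0 ≤ A u := hK₀pos.le.trans hA
          calc A u * ((1 - (y u)^2)/(y u) * (f (Γ u) - f (y u)))
              ≤ A u * ((1 - (y u)^2)/(y u) * (f mid - f θ)) := by
                apply mul_le_mul_of_nonneg_left _ hAnn
                exact mul_le_mul_of_nonneg_left hD hBnn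
            _ ≤ A u * ((1 - b'^2) * (f mid - f θ)) := by
                apply mul_le_mul_of_nonneg_left _ hAnn
                exact mul_le_mul_of_nonpos_right hB hDneg.le
            _ ≤ K₀ * ((1 - b'^2) * (f mid - f θ)) := by
                apply mul_le_mul_of_nonpos_right hA
                nlinarith
            _ = -δ := by rw [hδdef]; ring)
      filter_upwards [hev] with r hr
      linarith
  have hfin := hytend.sub hΓtend
  simpa using hfin
end

section
/- Let n ≥ 2 be an integer, c > 0 and r₀ > 0, and let ξ : [r₀, ∞) → ℝ be continuously differentiable with ξ(r) > 0 and ξ'(r) > 0. Let r₀ < R ≤ ∞ and let φ : [r₀, R) → (0, π/2) be differentiable with φ(r₀) = φ₀ and satisfy sin^{n−1}(φ(r)) φ'(r) = c (ξ(r)/ξ'(r))^{n−1} for all r ∈ [r₀, R). Then for every r ∈ [r₀, R), ∫_{φ₀}^{φ(r)} sin^{n−1} ψ dψ = c ∫_{r₀}^{r} (ξ(ρ)/ξ'(ρ))^{n−1} dρ; consequently c ∫_{r₀}^{r} (ξ(ρ)/ξ'(ρ))^{n−1} dρ ≤ ∫_{φ₀}^{π/2} sin^{n−1} ψ dψ <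 ∞ for all r ∈ [r₀, R), and in particular if ∫_{r₀}^{∞} (ξ(ρ)/ξ'(ρ))^{n−1} dρ = ∞ then R < ∞. -/
open Real Set Filter Topology Asymptotics MeasureTheory

/-- For the Gauss–Kronecker soliton ODE with parallel Killing field
and `α = 1`, `sin^{n-1}(φ) φ' = c (ξ/ξ')^{n-1}` integrates to
`∫_{φ₀}^{φ(r)} sin^{n-1} = c ∫_{r₀}^{r} (ξ/ξ')^{n-1}`; hence the right-hand side is
bounded by `∫_{φ₀}^{π/2} sin^{n-1}`, and if `∫_{r₀}^{∞} (ξ/ξ')^{n-1} = ∞` then the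
maximal radius `R` is finite. (`R : EReal` allows `R = ∞`.) -/
theorem stmt17 (n : ℕ) (hn : 2 ≤ n) (c r₀ : ℝ) (hc : 0 < c) (hr₀ : 0 < r₀)
    (ξ ξ' : ℝ → ℝ)
    (hξd : ∀ r ∈ Set.Ici r₀, HasDerivAt ξ (ξ' r) r)
    (hξ'c : ContinuousOn ξ' (Set.Ici r₀))
    (hξpos : ∀ r ∈ Set.Ici r₀, 0 < ξ r)
    (hξ'pos : ∀ r ∈ Set.Ici r₀, 0 < ξ' r)
    (R : EReal) (hR : (r₀ : EReal) < R)
    (φ φd : ℝ → ℝ)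
    (hφmem : ∀ r : ℝ, r₀ ≤ r → (r : EReal) < R → φ r ∈ Set.Ioo 0 (π / 2))
    (hφd : ∀ r : ℝ, r₀ ≤ r → (r : EReal) < R → HasDerivAt φ (φd r) r)
    (hφode : ∀ r : ℝ, r₀ ≤ r → (r : EReal) < R →
      Real.sin (φ r) ^ (n - 1) * φd r = c * (ξ r / ξ' r) ^ (n - 1)) :
    (∀ r : ℝ, r₀ ≤ r → (r : EReal) < R →
      (∫ ψ in (φ r₀)..(φ r), Real.sin ψ ^ (n - 1)) =
        c * ∫ ρ in r₀..r, (ξ ρ / ξ' ρ) ^ (n - 1)) ∧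
    (∀ r : ℝ, r₀ ≤ r → (r : EReal) < R →
      c * (∫ ρ in r₀..r, (ξ ρ / ξ' ρ) ^ (n - 1)) ≤
        ∫ ψ in (φ r₀)..(π / 2), Real.sin ψ ^ (n - 1)) ∧
    (Tendsto (fun t => ∫ ρ in r₀..t, (ξ ρ / ξ' ρ) ^ (n - 1)) atTop atTop → R < ⊤) := by
  set g : ℝ → ℝ := fun ρ => (ξ ρ / ξ' ρ) ^ (n - 1) with hg
  have hsc : Continuous (fun ψ : ℝ => Real.sin ψ ^ (n - 1)) := by continuity
  have hξc : ContinuousOn ξ (Set.Ici r₀) := fun x hx => (hξd x hx).continuousAt.continuousWithinAt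
  have hgc : ContinuousOn g (Set.Ici r₀) :=
    ((hξc.div hξ'c (fun x hx => (hξ'pos x hx).ne')).pow (n - 1))
  -- the key identity
  have key : ∀ r : ℝ, r₀ ≤ r → (r : EReal) < R →
      (∫ ψ in (φ r₀)..(φ r), Real.sin ψ ^ (n - 1)) = c * ∫ ρ in r₀..r, g ρ := by
    intro r hr hrR
    have hlt : ∀ t : ℝ, t ∈ Set.Icc r₀ r → (t : EReal) < R := fun t ht =>
      lt_of_le_of_lt (EReal.coe_le_coe_iff.mpr ht.2) hrR
    -- H = S ∘ φ
    set H : ℝ → ℝ := fun t => ∫ ψ in (φ r₀)..(φ t), Real.sin ψ ^ (n - 1) with hH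
    have hHd : ∀ t ∈ Set.Icc r₀ r, HasDerivAt H (c * g t) t := by
      intro t ht
      have h1 : HasDerivAt (fun u => ∫ ψ in (φ r₀)..u, Real.sin ψ ^ (n - 1))
          (Real.sin (φ t) ^ (n - 1)) (φ t) :=
        (hsc.integral_hasStrictDerivAt (φ r₀) (φ t)).hasDerivAt
      have h2 := h1.comp t (hφd t ht.1 (hlt t ht))
      rw [hφode t ht.1 (hlt t ht)] at h2
      exact h2
    have hHc : ContinuousOn H (Set.Icc r₀ r) := fun t ht =>
      (hHd t ht).continuousAt.continuousWithinAt
    have hgint : IntervalIntegrable (fun ρ => c * g ρ) MeasureTheory.volume r₀ r := by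
      apply ContinuousOn.intervalIntegrable
      rw [Set.uIcc_of_le hr]
      exact (continuousOn_const.mul (hgc.mono (Set.Icc_subset_Ici_self)))
    have := intervalIntegral.integral_eq_sub_of_hasDeriv_right_of_le hr hHc
      (fun t ht => (hHd t (Set.mem_Icc_of_Ioo ht)).hasDerivWithinAt) hgint
    have hH0 : H r₀ = 0 := by simp [hH]
    rw [hH0, sub_zero] at this
    rw [intervalIntegral.integral_const_mul] at this
    exact this.symm
  refine ⟨key, ?_, ?_⟩
  · -- boundedness
    intro r hr hrR
    rw [← key r hr hrR]
    have hφr := hφmem r hr hrR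
    have h1 : (∫ ψ in (φ r₀)..(π/2), Real.sin ψ ^ (n - 1)) =
        (∫ ψ in (φ r₀)..(φ r), Real.sin ψ ^ (n - 1)) +
        (∫ ψ in (φ r)..(π/2), Real.sin ψ ^ (n - 1)) := by
      rw [intervalIntegral.integral_add_adjacent_intervals] <;>
        exact (hsc.intervalIntegrable _ _)
    have h2 : 0 ≤ ∫ ψ in (φ r)..(π/2), Real.sin ψ ^ (n - 1) := by
      apply intervalIntegral.integral_nonneg hφr.2.le
      intro u hu
      exact pow_nonneg (Real.sin_nonneg_of_nonneg_of_le_pi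
        (le_trans hφr.1.le hu.1) (le_trans hu.2 (by linarith [Real.pi_pos]))) _
    linarith
  · -- finiteness of R
    intro htend
    by_contra hRtop
    have hRtop' : R = ⊤ := top_le_iff.mp (not_lt.mp hRtop)
    have hbd : ∀ r : ℝ, r₀ ≤ r →
        c * (∫ ρ in r₀..r, g ρ) ≤ ∫ ψ in (φ r₀)..(π/2), Real.sin ψ ^ (n - 1) := by
      intro r hr
      have hrR : (r : EReal) < R := hRtop' ▸ EReal.coe_lt_top r
      rw [← key r hr hrR]
      have hφr := hφmem r hr hrR
      have h1 : (∫ ψ in (φ r₀)..(π/2), Real.sin ψ ^ (n - 1)) =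
          (∫ ψ in (φ r₀)..(φ r), Real.sin ψ ^ (n - 1)) +
          (∫ ψ in (φ r)..(π/2), Real.sin ψ ^ (n - 1)) := by
        rw [intervalIntegral.integral_add_adjacent_intervals] <;>
          exact (hsc.intervalIntegrable _ _)
      have h2 : 0 ≤ ∫ ψ in (φ r)..(π/2), Real.sin ψ ^ (n - 1) := by
        apply intervalIntegral.integral_nonneg hφr.2.le
        intro u hu
        exact pow_nonneg (Real.sin_nonneg_of_nonneg_of_le_pi
          (le_trans hφr.1.le hu.1) (le_trans hu.2 (by linarith [Real.pi_pos]))) _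
      linarith
    have htend' : Tendsto (fun t => c * ∫ ρ in r₀..t, g ρ) atTop atTop :=
      htend.const_mul_atTop hc
    obtain ⟨r, hr⟩ := ((htend'.eventually_gt_atTop
      (∫ ψ in (φ r₀)..(π/2), Real.sin ψ ^ (n - 1))).and (eventually_ge_atTop r₀)).exists
    exact absurd (hbd r hr.2) (not_le.mpr hr.1)
end
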